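/- arXiv:1802.02349 — 4 statements merged into one kernel-verified Lean document; each statement's English description precedes it below -/
import Mathlib

section
/- Let λ ≥ 0 and γ ∈ (0,2], and let u ∈ C²(ℝ²) have bounded second-order partial derivatives. Then there exists a constant C > 0 such that for every (x,y) ∈ ℝ² and every (ξ,η) with ξ > 0 and η > 0, the second partial derivatives of φ_γ in ξ and in η exist and satisfy |∂²φ_γ/∂ξ²(ξ,η)| ≤ C·((ξ²+η²)^{−γ/2} + (ξ²+η²)^{1/2−γ/2} + (ξ²+η²)^{1−γ/2}) and |∂²φ_γ/∂η²(ξ,η)| ≤ C·((ξ²+η²)^{−γ/2} + (ξ²+η²)^{1/2−γ/2} + (ξ²+η²)^{1−γ/2}). -/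
open MeasureTheory Real Set

/-- The symmetrized second difference g(x,y,ξ,η). -/
noncomputable def gfun (u : ℝ × ℝ → ℝ) (x y ξ η : ℝ) : ℝ :=
  u (x + ξ, y + η) + u (x - ξ, y + η) + u (x - ξ, y - η) + u (x + ξ, y - η) - 4 * u (x, y)

/-- The auxiliary function φ_γ(ξ,η) (for a fixed base point (x,y)). -/
noncomputable def phi (u : ℝ × ℝ → ℝ) (lam γ x y ξ η : ℝ) : ℝ :=
  gfun u x y ξ η * Real.exp (-(lam * Real.sqrt (ξ ^ 2 + η ^ 2))) *
    (ξ ^ 2 + η ^ 2) ^ (-(γ / 2))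


set_option maxHeartbeats 1000000


section Prelim

variable (u : ℝ × ℝ → ℝ)

/-- derivative of a horizontally shifted slice -/
lemma hasDerivAt_shift (hf : Differentiable ℝ u) (ε a b t : ℝ) :
    HasDerivAt (fun s => u (a + ε * s, b)) (ε * fderiv ℝ u (a + ε * t, b) (1, 0)) t := by
  have h1 : HasDerivAt (fun s : ℝ => (a + ε * s, b)) ((ε, 0) : ℝ × ℝ) t := by
    have := (((hasDerivAt_id t).const_mul ε).const_add a).prodMk (hasDerivAt_const t b)
    simpa using this
  have h2 := (hf (a + ε * t, b)).hasFDerivAt.comp_hasDerivAt t h1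
  have h3 : ((ε, 0) : ℝ × ℝ) = ε • ((1 : ℝ), (0 : ℝ)) := by simp
  rw [h3, ContinuousLinearMap.map_smul] at h2
  simpa [Function.comp_def, smul_eq_mul] using h2

lemma norm_one_zero : ‖((1 : ℝ), (0 : ℝ))‖ = 1 := by
  simp [Prod.norm_def]

variable (hu : ContDiff ℝ 2 u) (M : ℝ) (hM : ∀ p : ℝ × ℝ, ‖iteratedFDeriv ℝ 2 u p‖ ≤ M)

include hu hM

omit hu in
lemma fderiv2_bound (p : ℝ × ℝ) : ‖fderiv ℝ (fderiv ℝ u) p‖ ≤ M := by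
  have hM0 : 0 ≤ M := le_trans (norm_nonneg _) (hM p)
  refine ContinuousLinearMap.opNorm_le_bound _ hM0 fun w => ?_
  refine ContinuousLinearMap.opNorm_le_bound _ (mul_nonneg hM0 (norm_nonneg w)) fun v => ?_
  have h1 : fderiv ℝ (fderiv ℝ u) p w v = iteratedFDeriv ℝ 2 u p ![w, v] := by
    rw [iteratedFDeriv_two_apply]; simp
  have h2 := (iteratedFDeriv ℝ 2 u p).le_opNorm ![w, v]
  rw [h1]
  calc ‖iteratedFDeriv ℝ 2 u p ![w, v]‖ ≤ ‖iteratedFDeriv ℝ 2 u p‖ * (‖w‖ * ‖v‖) := by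
        simpa [Fin.prod_univ_two] using h2
    _ ≤ M * (‖w‖ * ‖v‖) := by
        have : (0:ℝ) ≤ ‖w‖ * ‖v‖ := by positivity
        exact mul_le_mul_of_nonneg_right (hM p) this
    _ = M * ‖w‖ * ‖v‖ := by ring

lemma fderiv_lip (p q : ℝ × ℝ) : ‖fderiv ℝ u p - fderiv ℝ u q‖ ≤ M * ‖p - q‖ := by
  have hfd : Differentiable ℝ (fderiv ℝ u) :=
    (hu.fderiv_right (m := 1) (by norm_num)).differentiable one_ne_zero
  exact convex_univ.norm_image_sub_le_of_norm_fderiv_le (fun z _ => hfd z)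
    (fun z _ => fderiv2_bound u M hM z) trivial trivial

lemma u2_bound (p : ℝ × ℝ) :
    |fderiv ℝ (fun q => fderiv ℝ u q (1, 0)) p (1, 0)| ≤ M := by
  have hfd : Differentiable ℝ (fderiv ℝ u) :=
    (hu.fderiv_right (m := 1) (by norm_num)).differentiable one_ne_zero
  have h1 : fderiv ℝ (fun q => fderiv ℝ u q (1, 0)) p
      = (fderiv ℝ (fderiv ℝ u) p).flip ((1 : ℝ), (0 : ℝ)) := by
    have := fderiv_clm_apply (𝕜 := ℝ) (c := fderiv ℝ u)
      (u := fun _ : ℝ × ℝ => ((1 : ℝ), (0 : ℝ))) (x := p) (hfd p)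
      (differentiableAt_const _)
    simpa using this
  rw [h1]
  have h2 : (fderiv ℝ (fderiv ℝ u) p).flip ((1 : ℝ), (0 : ℝ)) ((1 : ℝ), (0 : ℝ))
      = fderiv ℝ (fderiv ℝ u) p ((1 : ℝ), (0 : ℝ)) ((1 : ℝ), (0 : ℝ)) := rfl
  calc |(fderiv ℝ (fderiv ℝ u) p).flip ((1:ℝ), (0:ℝ)) ((1:ℝ), (0:ℝ))|
      = ‖fderiv ℝ (fderiv ℝ u) p ((1:ℝ), (0:ℝ)) ((1:ℝ), (0:ℝ))‖ := by rw [← Real.norm_eq_abs, h2]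
    _ ≤ ‖fderiv ℝ (fderiv ℝ u) p ((1:ℝ), (0:ℝ))‖ * ‖((1:ℝ), (0:ℝ))‖ :=
        ContinuousLinearMap.le_opNorm _ _
    _ ≤ ‖fderiv ℝ (fderiv ℝ u) p‖ * ‖((1:ℝ), (0:ℝ))‖ * ‖((1:ℝ), (0:ℝ))‖ := by
        gcongr; exact ContinuousLinearMap.le_opNorm _ _
    _ ≤ M := by rw [norm_one_zero]; simpa using fderiv2_bound u M hM p

lemma u1_lip (p q : ℝ × ℝ) :
    |fderiv ℝ u p (1, 0) - fderiv ℝ u q (1, 0)| ≤ M * ‖p - q‖ := by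
  have h1 : fderiv ℝ u p (1, 0) - fderiv ℝ u q (1, 0)
      = (fderiv ℝ u p - fderiv ℝ u q) ((1 : ℝ), (0 : ℝ)) := rfl
  rw [h1, ← Real.norm_eq_abs]
  calc ‖(fderiv ℝ u p - fderiv ℝ u q) ((1:ℝ), (0:ℝ))‖
      ≤ ‖fderiv ℝ u p - fderiv ℝ u q‖ * ‖((1:ℝ), (0:ℝ))‖ := ContinuousLinearMap.le_opNorm _ _
    _ ≤ M * ‖p - q‖ := by rw [norm_one_zero, mul_one]; exact fderiv_lip u hu M hM p q

omit hu hM in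
lemma norm_pair_sq_le (c d : ℝ) : ‖((c, d) : ℝ × ℝ)‖ ^ 2 ≤ c ^ 2 + d ^ 2 := by
  rw [Prod.norm_def]
  rcases le_total ‖c‖ ‖d‖ with h | h
  · rw [max_eq_right h]; simp only [Real.norm_eq_abs]; nlinarith [sq_abs d, sq_nonneg c]
  · rw [max_eq_left h]; simp only [Real.norm_eq_abs]; nlinarith [sq_abs c, sq_nonneg d]

lemma second_diff_bound (x y c d : ℝ) :
    |u (x + c, y + d) + u (x - c, y - d) - 2 * u (x, y)| ≤ 2 * M * (c ^ 2 + d ^ 2) := by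
  have hM0 : 0 ≤ M := le_trans (norm_nonneg _) (hM (0, 0))
  have hf : Differentiable ℝ u := hu.differentiable (by norm_num)
  set k : ℝ → ℝ := fun s => u (x + s * c, y + s * d) + u (x - s * c, y - s * d) with hk_def
  have hk : ∀ s : ℝ, HasDerivAt k
      (fderiv ℝ u (x + s * c, y + s * d) (c, d) - fderiv ℝ u (x - s * c, y - s * d) (c, d)) s := by
    intro s
    have h1 : HasDerivAt (fun s : ℝ => (x + s * c, y + s * d)) ((c, d) : ℝ × ℝ) s := by
      have := (((hasDerivAt_id s).mul_const c).const_add x).prodMk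
        (((hasDerivAt_id s).mul_const d).const_add y)
      simpa using this
    have h2 : HasDerivAt (fun s : ℝ => (x - s * c, y - s * d)) ((-(c, d)) : ℝ × ℝ) s := by
      have := (((hasDerivAt_id s).mul_const c).const_sub x).prodMk
        (((hasDerivAt_id s).mul_const d).const_sub y)
      simpa [Prod.neg_mk] using this
    have g1 := (hf (x + s * c, y + s * d)).hasFDerivAt.comp_hasDerivAt s h1
    have g2 := (hf (x - s * c, y - s * d)).hasFDerivAt.comp_hasDerivAt s h2
    rw [ContinuousLinearMap.map_neg] at g2
    have := g1.add g2
    simpa [Function.comp_def, Pi.add_def, sub_eq_add_neg, hk_def] using this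
  have hbound : ∀ s ∈ Icc (0 : ℝ) 1, ‖deriv k s‖ ≤ 2 * M * (c ^ 2 + d ^ 2) := by
    intro s hs
    rw [(hk s).deriv]
    have e1 : fderiv ℝ u (x + s * c, y + s * d) (c, d) - fderiv ℝ u (x - s * c, y - s * d) (c, d)
        = (fderiv ℝ u (x + s * c, y + s * d) - fderiv ℝ u (x - s * c, y - s * d)) ((c, d) : ℝ × ℝ) := rfl
    rw [e1]
    have e2 : ((x + s * c, y + s * d) : ℝ × ℝ) - (x - s * c, y - s * d)
        = (2 * s) • ((c, d) : ℝ × ℝ) := by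
      simp [Prod.ext_iff, Prod.smul_def, smul_eq_mul]; constructor <;> ring
    calc ‖(fderiv ℝ u (x + s * c, y + s * d) - fderiv ℝ u (x - s * c, y - s * d)) ((c, d) : ℝ × ℝ)‖
        ≤ ‖fderiv ℝ u (x + s * c, y + s * d) - fderiv ℝ u (x - s * c, y - s * d)‖ * ‖((c, d) : ℝ × ℝ)‖ :=
          ContinuousLinearMap.le_opNorm _ _
      _ ≤ (M * ‖((x + s * c, y + s * d) : ℝ × ℝ) - (x - s * c, y - s * d)‖) * ‖((c, d) : ℝ × ℝ)‖ := by
          gcongr; exact fderiv_lip u hu M hM _ _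
      _ = M * |2 * s| * (‖((c, d) : ℝ × ℝ)‖ * ‖((c, d) : ℝ × ℝ)‖) := by
          rw [e2, norm_smul, Real.norm_eq_abs]; ring
      _ ≤ 2 * M * (c ^ 2 + d ^ 2) := by
          have h2s : |2 * s| ≤ 2 := by
            rw [abs_mul, abs_two]
            have : |s| ≤ 1 := abs_le.mpr ⟨by linarith [hs.1], hs.2⟩
            linarith
          have hn : ‖((c, d) : ℝ × ℝ)‖ * ‖((c, d) : ℝ × ℝ)‖ ≤ c ^ 2 + d ^ 2 := by
            have := norm_pair_sq_le c d; nlinarith [norm_nonneg ((c, d) : ℝ × ℝ)]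
          have hMs : M * |2 * s| ≤ 2 * M := by
            have := mul_le_mul_of_nonneg_left h2s hM0; linarith
          exact mul_le_mul hMs hn (by positivity) (by positivity)
  have hmv := (convex_Icc (0 : ℝ) 1).norm_image_sub_le_of_norm_deriv_le
    (fun s _ => (hk s).differentiableAt) hbound
    (left_mem_Icc.mpr zero_le_one) (right_mem_Icc.mpr zero_le_one)
  have hk1 : k 1 = u (x + c, y + d) + u (x - c, y - d) := by simp [hk_def]
  have hk0 : k 0 = 2 * u (x, y) := by simp [hk_def]; ring
  have : ‖k 1 - k 0‖ ≤ 2 * M * (c ^ 2 + d ^ 2) * ‖(1 : ℝ) - 0‖ := hmv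
  rw [hk1, hk0] at this
  simpa [Real.norm_eq_abs] using this

end Prelim

noncomputable def U1 (u : ℝ × ℝ → ℝ) (p : ℝ × ℝ) : ℝ := fderiv ℝ u p (1, 0)
noncomputable def U2 (u : ℝ × ℝ → ℝ) (p : ℝ × ℝ) : ℝ := fderiv ℝ (U1 u) p (1, 0)
noncomputable def Rf (η t : ℝ) : ℝ := Real.sqrt (t ^ 2 + η ^ 2)
noncomputable def Ef (lam η t : ℝ) : ℝ := Real.exp (-(lam * Rf η t))
noncomputable def Pf (γ η t : ℝ) : ℝ := (t ^ 2 + η ^ 2) ^ (-(γ / 2))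
noncomputable def Ad (u : ℝ × ℝ → ℝ) (x y η t : ℝ) : ℝ :=
  U1 u (x + t, y + η) - U1 u (x - t, y + η) - U1 u (x - t, y - η) + U1 u (x + t, y - η)
noncomputable def Add' (u : ℝ × ℝ → ℝ) (x y η t : ℝ) : ℝ :=
  U2 u (x + t, y + η) + U2 u (x - t, y + η) + U2 u (x - t, y - η) + U2 u (x + t, y - η)
noncomputable def Ed (lam η t : ℝ) : ℝ := Ef lam η t * (-(lam * (t / Rf η t)))
noncomputable def Pd (γ η t : ℝ) : ℝ :=
  2 * t * (-(γ / 2)) * (t ^ 2 + η ^ 2) ^ (-(γ / 2) - 1)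
noncomputable def Edd (lam η t : ℝ) : ℝ :=
  Ed lam η t * (-(lam * (t / Rf η t))) +
    Ef lam η t * (-(lam * ((1 * Rf η t - t * (t / Rf η t)) / Rf η t ^ 2)))
noncomputable def Pdd (γ η t : ℝ) : ℝ :=
  2 * (-(γ / 2)) * (t ^ 2 + η ^ 2) ^ (-(γ / 2) - 1) +
    2 * t * (-(γ / 2)) * (2 * t * (-(γ / 2) - 1) * (t ^ 2 + η ^ 2) ^ (-(γ / 2) - 1 - 1))
noncomputable def Bf (lam γ η t : ℝ) : ℝ := Ef lam η t * Pf γ η t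
noncomputable def Bd (lam γ η t : ℝ) : ℝ := Ed lam η t * Pf γ η t + Ef lam η t * Pd γ η t
noncomputable def Bdd (lam γ η t : ℝ) : ℝ :=
  (Edd lam η t * Pf γ η t + Ed lam η t * Pd γ η t) +
    (Ed lam η t * Pd γ η t + Ef lam η t * Pdd γ η t)
noncomputable def Phid (u : ℝ × ℝ → ℝ) (lam γ x y η t : ℝ) : ℝ :=
  Ad u x y η t * Bf lam γ η t + gfun u x y t η * Bd lam γ η t
noncomputable def Phidd (u : ℝ × ℝ → ℝ) (lam γ x y η t : ℝ) : ℝ :=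
  (Add' u x y η t * Bf lam γ η t + Ad u x y η t * Bd lam γ η t) +
    (Ad u x y η t * Bd lam γ η t + gfun u x y t η * Bdd lam γ η t)

section derivs
variable (u : ℝ × ℝ → ℝ) (hu : ContDiff ℝ 2 u) (lam γ x y η t : ℝ) (hη : η ≠ 0)

include hη in
lemma q_pos : 0 < t ^ 2 + η ^ 2 := by positivity

include hη in
lemma Rf_pos : 0 < Rf η t := Real.sqrt_pos.mpr (q_pos η t hη)

include hu in
lemma hasDerivAt_A : HasDerivAt (fun s => gfun u x y s η) (Ad u x y η t) t := by
  have hf : Differentiable ℝ u := hu.differentiable (by norm_num)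
  have h1 := hasDerivAt_shift u hf 1 x (y + η) t
  have h2 := hasDerivAt_shift u hf (-1) x (y + η) t
  have h3 := hasDerivAt_shift u hf (-1) x (y - η) t
  have h4 := hasDerivAt_shift u hf 1 x (y - η) t
  simp only [one_mul, neg_one_mul, ← sub_eq_add_neg] at h1 h2 h3 h4
  have := (((h1.add h2).add h3).add h4).sub_const (4 * u (x, y))
  simp only [gfun]
  exact this.congr_deriv (by simp only [Ad, U1]; ring)

include hu in
lemma hasDerivAt_Ad : HasDerivAt (fun s => Ad u x y η s) (Add' u x y η t) t := by
  have hf : Differentiable ℝ (U1 u) :=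
    ((hu.fderiv_right (m := 1) (by norm_num)).clm_apply contDiff_const).differentiable one_ne_zero
  have h1 := hasDerivAt_shift (U1 u) hf 1 x (y + η) t
  have h2 := hasDerivAt_shift (U1 u) hf (-1) x (y + η) t
  have h3 := hasDerivAt_shift (U1 u) hf (-1) x (y - η) t
  have h4 := hasDerivAt_shift (U1 u) hf 1 x (y - η) t
  simp only [one_mul, neg_one_mul, ← sub_eq_add_neg] at h1 h2 h3 h4
  have := ((h1.sub h2).sub h3).add h4
  simp only [Ad]
  exact this.congr_deriv (by simp only [Add', U2]; ring)

include hη in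
lemma hasDerivAt_R : HasDerivAt (Rf η) (t / Rf η t) t := by
  have hq : HasDerivAt (fun s : ℝ => s ^ 2 + η ^ 2) (2 * t) t := by
    have := (hasDerivAt_pow 2 t).add_const (η ^ 2)
    simpa using this
  have := hq.sqrt (q_pos η t hη).ne'
  exact this.congr_deriv (by rw [Rf, mul_div_mul_left _ _ (two_ne_zero)])

include hη in
lemma hasDerivAt_E : HasDerivAt (Ef lam η) (Ed lam η t) t := by
  exact (((hasDerivAt_R η t hη).const_mul lam).neg).exp

include hη in
lemma hasDerivAt_P : HasDerivAt (Pf γ η) (Pd γ η t) t := by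
  have hq : HasDerivAt (fun s : ℝ => s ^ 2 + η ^ 2) (2 * t) t := by
    have := (hasDerivAt_pow 2 t).add_const (η ^ 2)
    simpa using this
  exact hq.rpow_const (p := -(γ / 2)) (Or.inl (q_pos η t hη).ne')

include hη in
lemma hasDerivAt_T : HasDerivAt (fun s => s / Rf η s)
    ((1 * Rf η t - t * (t / Rf η t)) / Rf η t ^ 2) t :=
  (hasDerivAt_id t).div (hasDerivAt_R η t hη) (Rf_pos η t hη).ne'

include hη in
lemma hasDerivAt_Ed : HasDerivAt (Ed lam η) (Edd lam η t) t :=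
  (hasDerivAt_E lam η t hη).mul (((hasDerivAt_T η t hη).const_mul lam).neg)

include hη in
lemma hasDerivAt_Pd : HasDerivAt (Pd γ η) (Pdd γ η t) t := by
  have hq : HasDerivAt (fun s : ℝ => s ^ 2 + η ^ 2) (2 * t) t := by
    have := (hasDerivAt_pow 2 t).add_const (η ^ 2)
    simpa using this
  have hc : HasDerivAt (fun s : ℝ => 2 * s * (-(γ / 2))) (2 * (-(γ / 2))) t := by
    have := ((hasDerivAt_id t).const_mul 2).mul_const (-(γ / 2))
    simpa using this
  have hrp := hq.rpow_const (p := -(γ / 2) - 1) (Or.inl (q_pos η t hη).ne')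
  exact hc.mul hrp

include hη in
lemma hasDerivAt_B : HasDerivAt (Bf lam γ η) (Bd lam γ η t) t :=
  (hasDerivAt_E lam η t hη).mul (hasDerivAt_P γ η t hη)

include hη in
lemma hasDerivAt_Bd : HasDerivAt (Bd lam γ η) (Bdd lam γ η t) t :=
  ((hasDerivAt_Ed lam η t hη).mul (hasDerivAt_P γ η t hη)).add
    ((hasDerivAt_E lam η t hη).mul (hasDerivAt_Pd γ η t hη))

lemma phi_eq : (fun s => phi u lam γ x y s η) = fun s => gfun u x y s η * Bf lam γ η s := by
  funext s
  simp only [phi, Bf, Ef, Pf, Rf]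
  ring

include hu hη in
lemma hasDerivAt_phi :
    HasDerivAt (fun s => phi u lam γ x y s η) (Phid u lam γ x y η t) t := by
  rw [phi_eq]
  exact (hasDerivAt_A u hu x y η t).mul (hasDerivAt_B lam γ η t hη)

include hu hη in
lemma hasDerivAt_Phid :
    HasDerivAt (Phid u lam γ x y η) (Phidd u lam γ x y η t) t :=
  ((hasDerivAt_Ad u hu x y η t).mul (hasDerivAt_B lam γ η t hη)).add
    ((hasDerivAt_A u hu x y η t).mul (hasDerivAt_Bd lam γ η t hη))

end derivs



section bounds
variable (lam γ η t : ℝ) (hlam : 0 ≤ lam) (hγ0 : 0 < γ) (hη : η ≠ 0)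

lemma abs_t_le : |t| ≤ Rf η t := by
  calc |t| = Real.sqrt (t ^ 2) := (Real.sqrt_sq_eq_abs t).symm
    _ ≤ Rf η t := Real.sqrt_le_sqrt (by nlinarith [sq_nonneg η])

include hη in
lemma abs_T_le : |t / Rf η t| ≤ 1 := by
  rw [abs_div, abs_of_pos (Rf_pos η t hη)]
  exact div_le_one_of_le₀ (abs_t_le η t) (Rf_pos η t hη).le

include hlam in
lemma Ef_le_one : |Ef lam η t| ≤ 1 := by
  rw [Ef, abs_of_pos (Real.exp_pos _)]
  apply Real.exp_le_one_iff.mpr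
  have : 0 ≤ Rf η t := Real.sqrt_nonneg _
  nlinarith

include hlam hη in
lemma abs_Ed_le : |Ed lam η t| ≤ lam := by
  rw [Ed, abs_mul, abs_neg, abs_mul, abs_of_nonneg hlam]
  calc |Ef lam η t| * (lam * |t / Rf η t|) ≤ 1 * (lam * 1) := by
        apply mul_le_mul (Ef_le_one lam η t hlam)
        · exact mul_le_mul_of_nonneg_left (abs_T_le η t hη) hlam
        · positivity
        · norm_num
    _ = lam := by ring

include hlam hη in
lemma abs_Edd_le : |Edd lam η t| ≤ lam * lam + lam * (2 / Rf η t) := by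
  have hr := Rf_pos η t hη
  have hD : |(1 * Rf η t - t * (t / Rf η t)) / Rf η t ^ 2| ≤ 2 / Rf η t := by
    rw [abs_div, abs_of_pos (by positivity : (0:ℝ) < Rf η t ^ 2)]
    have hnum : |1 * Rf η t - t * (t / Rf η t)| ≤ 2 * Rf η t := by
      calc |1 * Rf η t - t * (t / Rf η t)| ≤ |1 * Rf η t| + |t * (t / Rf η t)| := abs_sub _ _
        _ ≤ Rf η t + Rf η t := by
            apply add_le_add
            · rw [one_mul, abs_of_pos hr]
            · rw [abs_mul]
              calc |t| * |t / Rf η t| ≤ Rf η t * 1 :=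
                    mul_le_mul (abs_t_le η t) (abs_T_le η t hη) (abs_nonneg _) hr.le
                _ = Rf η t := mul_one _
        _ = 2 * Rf η t := by ring
    calc |1 * Rf η t - t * (t / Rf η t)| / Rf η t ^ 2 ≤ (2 * Rf η t) / Rf η t ^ 2 := by
          gcongr
      _ = 2 / Rf η t := by rw [pow_two, mul_div_mul_right _ _ hr.ne']
  rw [Edd]
  calc |Ed lam η t * -(lam * (t / Rf η t)) +
        Ef lam η t * -(lam * ((1 * Rf η t - t * (t / Rf η t)) / Rf η t ^ 2))|
      ≤ |Ed lam η t * -(lam * (t / Rf η t))| +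
        |Ef lam η t * -(lam * ((1 * Rf η t - t * (t / Rf η t)) / Rf η t ^ 2))| := abs_add_le _ _
    _ ≤ lam * lam + lam * (2 / Rf η t) := by
        apply add_le_add
        · rw [abs_mul, abs_neg, abs_mul, abs_of_nonneg hlam]
          calc |Ed lam η t| * (lam * |t / Rf η t|) ≤ lam * (lam * 1) := by
                apply mul_le_mul (abs_Ed_le lam η t hlam hη)
                · exact mul_le_mul_of_nonneg_left (abs_T_le η t hη) hlam
                · positivity
                · exact hlam
            _ = lam * lam := by ring
        · rw [abs_mul, abs_neg, abs_mul, abs_of_nonneg hlam]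
          calc |Ef lam η t| * (lam * |(1 * Rf η t - t * (t / Rf η t)) / Rf η t ^ 2|)
              ≤ 1 * (lam * (2 / Rf η t)) := by
                apply mul_le_mul (Ef_le_one lam η t hlam)
                · exact mul_le_mul_of_nonneg_left hD hlam
                · positivity
                · norm_num
            _ = lam * (2 / Rf η t) := by ring

include hη in
lemma Pf_abs : |Pf γ η t| = (t ^ 2 + η ^ 2) ^ (-(γ / 2)) :=
  abs_of_pos (Real.rpow_pos_of_pos (q_pos η t hη) _)

include hγ0 hη in
lemma abs_Pd_le : |Pd γ η t| ≤ γ * Rf η t * (t ^ 2 + η ^ 2) ^ (-(γ / 2) - 1) := by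
  have hq := q_pos η t hη
  have hP1 : (0:ℝ) < (t ^ 2 + η ^ 2) ^ (-(γ / 2) - 1) := Real.rpow_pos_of_pos hq _
  rw [Pd, abs_mul, abs_mul, abs_neg, abs_of_pos (by positivity : (0:ℝ) < γ / 2),
    abs_of_pos hP1, abs_mul, abs_two]
  have ht := abs_t_le η t
  nlinarith [abs_nonneg t, hP1.le, mul_le_mul_of_nonneg_right ht
    (by positivity : (0:ℝ) ≤ γ * (t ^ 2 + η ^ 2) ^ (-(γ / 2) - 1))]

include hγ0 hη in
lemma abs_Pdd_le : |Pdd γ η t| ≤ γ * (γ + 3) * (t ^ 2 + η ^ 2) ^ (-(γ / 2) - 1) := by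
  have hq := q_pos η t hη
  have hP1 : (0:ℝ) < (t ^ 2 + η ^ 2) ^ (-(γ / 2) - 1) := Real.rpow_pos_of_pos hq _
  have hP2 : (0:ℝ) < (t ^ 2 + η ^ 2) ^ (-(γ / 2) - 1 - 1) := Real.rpow_pos_of_pos hq _
  have hmul : (t ^ 2 + η ^ 2) * (t ^ 2 + η ^ 2) ^ (-(γ / 2) - 1 - 1)
      = (t ^ 2 + η ^ 2) ^ (-(γ / 2) - 1) := by
    rw [show (-(γ / 2) - 1 - 1 : ℝ) = (-(γ / 2) - 1) - 1 by ring,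
      Real.rpow_sub_one hq.ne']
    field_simp
  have ht2 : t ^ 2 ≤ t ^ 2 + η ^ 2 := by nlinarith [sq_nonneg η]
  rw [Pdd]
  calc |2 * (-(γ / 2)) * (t ^ 2 + η ^ 2) ^ (-(γ / 2) - 1) +
        2 * t * (-(γ / 2)) * (2 * t * (-(γ / 2) - 1) * (t ^ 2 + η ^ 2) ^ (-(γ / 2) - 1 - 1))|
      ≤ |2 * (-(γ / 2)) * (t ^ 2 + η ^ 2) ^ (-(γ / 2) - 1)| +
        |2 * t * (-(γ / 2)) * (2 * t * (-(γ / 2) - 1) * (t ^ 2 + η ^ 2) ^ (-(γ / 2) - 1 - 1))| :=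
        abs_add_le _ _
    _ ≤ γ * (γ + 3) * (t ^ 2 + η ^ 2) ^ (-(γ / 2) - 1) := by
        have e1 : |2 * (-(γ / 2)) * (t ^ 2 + η ^ 2) ^ (-(γ / 2) - 1)|
            = γ * (t ^ 2 + η ^ 2) ^ (-(γ / 2) - 1) := by
          rw [abs_mul, abs_mul, abs_two, abs_neg, abs_of_pos (by positivity : (0:ℝ) < γ / 2),
            abs_of_pos hP1]
          ring
        have habs2 : |t| * |t| = t ^ 2 := by rw [← abs_mul, ← pow_two, abs_of_nonneg (sq_nonneg t)]
        have e2 : |2 * t * (-(γ / 2)) * (2 * t * (-(γ / 2) - 1) * (t ^ 2 + η ^ 2) ^ (-(γ / 2) - 1 - 1))|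
            = γ * (γ + 2) * (t ^ 2 * (t ^ 2 + η ^ 2) ^ (-(γ / 2) - 1 - 1)) := by
          rw [abs_mul, abs_mul, abs_mul, abs_mul, abs_mul, abs_two, abs_neg,
            abs_of_pos (by positivity : (0:ℝ) < γ / 2), abs_of_pos hP2,
            show |-(γ / 2) - 1| = γ / 2 + 1 by rw [abs_of_neg (by linarith)]; ring]
          rw [abs_mul, abs_two]
          linear_combination (γ * (γ + 2) * (t ^ 2 + η ^ 2) ^ (-(γ / 2) - 1 - 1)) * habs2
        rw [e1, e2]
        have hm1 : t ^ 2 * (γ * (γ + 2) * (t ^ 2 + η ^ 2) ^ (-(γ / 2) - 1 - 1)) ≤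
            (t ^ 2 + η ^ 2) * (γ * (γ + 2) * (t ^ 2 + η ^ 2) ^ (-(γ / 2) - 1 - 1)) :=
          mul_le_mul_of_nonneg_right ht2 (by positivity)
        have hm2 : γ * (γ + 2) * ((t ^ 2 + η ^ 2) * (t ^ 2 + η ^ 2) ^ (-(γ / 2) - 1 - 1)) =
            γ * (γ + 2) * (t ^ 2 + η ^ 2) ^ (-(γ / 2) - 1) := by rw [hmul]
        nlinarith [hm1, hm2, hP1.le, hP2.le]

include hlam hη in
lemma abs_Bf_le : |Bf lam γ η t| ≤ (t ^ 2 + η ^ 2) ^ (-(γ / 2)) := by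
  rw [Bf, abs_mul, Pf_abs γ η t hη]
  calc |Ef lam η t| * (t ^ 2 + η ^ 2) ^ (-(γ / 2))
      ≤ 1 * (t ^ 2 + η ^ 2) ^ (-(γ / 2)) :=
        mul_le_mul_of_nonneg_right (Ef_le_one lam η t hlam) (Real.rpow_nonneg (q_pos η t hη).le _)
    _ = _ := one_mul _

include hlam hγ0 hη in
lemma abs_Bd_le : |Bd lam γ η t| ≤
    lam * (t ^ 2 + η ^ 2) ^ (-(γ / 2)) + γ * Rf η t * (t ^ 2 + η ^ 2) ^ (-(γ / 2) - 1) := by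
  have hq := q_pos η t hη
  rw [Bd]
  calc |Ed lam η t * Pf γ η t + Ef lam η t * Pd γ η t|
      ≤ |Ed lam η t * Pf γ η t| + |Ef lam η t * Pd γ η t| := abs_add_le _ _
    _ ≤ lam * (t ^ 2 + η ^ 2) ^ (-(γ / 2)) + γ * Rf η t * (t ^ 2 + η ^ 2) ^ (-(γ / 2) - 1) := by
        apply add_le_add
        · rw [abs_mul, Pf_abs γ η t hη]
          exact mul_le_mul_of_nonneg_right (abs_Ed_le lam η t hlam hη)
            (Real.rpow_nonneg hq.le _)
        · rw [abs_mul]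
          calc |Ef lam η t| * |Pd γ η t|
              ≤ 1 * (γ * Rf η t * (t ^ 2 + η ^ 2) ^ (-(γ / 2) - 1)) := by
                apply mul_le_mul (Ef_le_one lam η t hlam) (abs_Pd_le γ η t hγ0 hη)
                  (abs_nonneg _) (by norm_num)
            _ = _ := one_mul _

include hlam hγ0 hη in
lemma abs_Bdd_le : |Bdd lam γ η t| ≤
    (lam * lam + lam * (2 / Rf η t)) * (t ^ 2 + η ^ 2) ^ (-(γ / 2)) +
      2 * (lam * (γ * Rf η t * (t ^ 2 + η ^ 2) ^ (-(γ / 2) - 1))) +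
      γ * (γ + 3) * (t ^ 2 + η ^ 2) ^ (-(γ / 2) - 1) := by
  have hq := q_pos η t hη
  have hr := Rf_pos η t hη
  have h1 : |Edd lam η t * Pf γ η t| ≤
      (lam * lam + lam * (2 / Rf η t)) * (t ^ 2 + η ^ 2) ^ (-(γ / 2)) := by
    rw [abs_mul, Pf_abs γ η t hη]
    exact mul_le_mul_of_nonneg_right (abs_Edd_le lam η t hlam hη) (Real.rpow_nonneg hq.le _)
  have h2 : |Ed lam η t * Pd γ η t| ≤ lam * (γ * Rf η t * (t ^ 2 + η ^ 2) ^ (-(γ / 2) - 1)) := by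
    rw [abs_mul]
    exact mul_le_mul (abs_Ed_le lam η t hlam hη) (abs_Pd_le γ η t hγ0 hη) (abs_nonneg _) hlam
  have h3 : |Ef lam η t * Pdd γ η t| ≤ γ * (γ + 3) * (t ^ 2 + η ^ 2) ^ (-(γ / 2) - 1) := by
    rw [abs_mul]
    calc |Ef lam η t| * |Pdd γ η t| ≤ 1 * (γ * (γ + 3) * (t ^ 2 + η ^ 2) ^ (-(γ / 2) - 1)) :=
          mul_le_mul (Ef_le_one lam η t hlam) (abs_Pdd_le γ η t hγ0 hη) (abs_nonneg _)
            (by norm_num)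
      _ = _ := one_mul _
  rw [Bdd]
  calc |Edd lam η t * Pf γ η t + Ed lam η t * Pd γ η t +
        (Ed lam η t * Pd γ η t + Ef lam η t * Pdd γ η t)|
      ≤ |Edd lam η t * Pf γ η t + Ed lam η t * Pd γ η t| +
        |Ed lam η t * Pd γ η t + Ef lam η t * Pdd γ η t| := abs_add_le _ _
    _ ≤ (|Edd lam η t * Pf γ η t| + |Ed lam η t * Pd γ η t|) +
        (|Ed lam η t * Pd γ η t| + |Ef lam η t * Pdd γ η t|) :=
        add_le_add (abs_add_le _ _) (abs_add_le _ _)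
    _ ≤ _ := by
        have := h1; have := h2; have := h3
        nlinarith [h1, h2, h3]

end bounds

section Abounds
variable (u : ℝ × ℝ → ℝ) (hu : ContDiff ℝ 2 u) (M : ℝ)
  (hM : ∀ p : ℝ × ℝ, ‖iteratedFDeriv ℝ 2 u p‖ ≤ M) (x y η t : ℝ)

include hu hM in
lemma abs_gfun_le : |gfun u x y t η| ≤ 4 * M * (t ^ 2 + η ^ 2) := by
  have h1 := second_diff_bound u hu M hM x y t η
  have h2 := second_diff_bound u hu M hM x y (-t) η
  simp only [← sub_eq_add_neg, sub_neg_eq_add, neg_sq] at h2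
  have heq : gfun u x y t η = (u (x + t, y + η) + u (x - t, y - η) - 2 * u (x, y)) +
      (u (x - t, y + η) + u (x + t, y - η) - 2 * u (x, y)) := by
    rw [gfun]; ring
  rw [heq]
  calc |(u (x + t, y + η) + u (x - t, y - η) - 2 * u (x, y)) +
        (u (x - t, y + η) + u (x + t, y - η) - 2 * u (x, y))|
      ≤ |u (x + t, y + η) + u (x - t, y - η) - 2 * u (x, y)| +
        |u (x - t, y + η) + u (x + t, y - η) - 2 * u (x, y)| := abs_add_le _ _
    _ ≤ 4 * M * (t ^ 2 + η ^ 2) := by linarith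

include hu hM in
lemma abs_Ad_le : |Ad u x y η t| ≤ 4 * M * Rf η t := by
  have hM0 : 0 ≤ M := le_trans (norm_nonneg _) (hM (0, 0))
  have l1 := u1_lip u hu M hM (x + t, y + η) (x - t, y + η)
  have l2 := u1_lip u hu M hM (x + t, y - η) (x - t, y - η)
  have e1 : ((x + t, y + η) : ℝ × ℝ) - (x - t, y + η) = (2 * t, 0) := by
    rw [Prod.mk_sub_mk]; congr 1 <;> ring
  have e2 : ((x + t, y - η) : ℝ × ℝ) - (x - t, y - η) = (2 * t, 0) := by
    rw [Prod.mk_sub_mk]; congr 1 <;> ring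
  have en : ‖((2 * t, 0) : ℝ × ℝ)‖ = |2 * t| := by
    simp [Prod.norm_def, abs_mul]
  rw [e1, en] at l1
  rw [e2, en] at l2
  have ht : |2 * t| ≤ 2 * Rf η t := by
    rw [abs_mul, abs_two]
    have := abs_t_le η t
    linarith
  have hb1 : M * |2 * t| ≤ M * (2 * Rf η t) := mul_le_mul_of_nonneg_left ht hM0
  have heq : Ad u x y η t =
      (U1 u (x + t, y + η) - U1 u (x - t, y + η)) +
      (U1 u (x + t, y - η) - U1 u (x - t, y - η)) := by
    rw [Ad]; ring
  rw [heq]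
  have l1' : |U1 u (x + t, y + η) - U1 u (x - t, y + η)| ≤ M * |2 * t| := l1
  have l2' : |U1 u (x + t, y - η) - U1 u (x - t, y - η)| ≤ M * |2 * t| := l2
  calc |(U1 u (x + t, y + η) - U1 u (x - t, y + η)) +
        (U1 u (x + t, y - η) - U1 u (x - t, y - η))|
      ≤ |U1 u (x + t, y + η) - U1 u (x - t, y + η)| +
        |U1 u (x + t, y - η) - U1 u (x - t, y - η)| := abs_add_le _ _
    _ ≤ 4 * M * Rf η t := by linarith

include hu hM in
lemma abs_Add_le : |Add' u x y η t| ≤ 4 * M := by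
  have b1 : |U2 u (x + t, y + η)| ≤ M := u2_bound u hu M hM _
  have b2 : |U2 u (x - t, y + η)| ≤ M := u2_bound u hu M hM _
  have b3 : |U2 u (x - t, y - η)| ≤ M := u2_bound u hu M hM _
  have b4 : |U2 u (x + t, y - η)| ≤ M := u2_bound u hu M hM _
  rw [Add']
  calc |U2 u (x + t, y + η) + U2 u (x - t, y + η) + U2 u (x - t, y - η) + U2 u (x + t, y - η)|
      ≤ |U2 u (x + t, y + η) + U2 u (x - t, y + η) + U2 u (x - t, y - η)| +
        |U2 u (x + t, y - η)| := abs_add_le _ _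
    _ ≤ |U2 u (x + t, y + η) + U2 u (x - t, y + η)| + |U2 u (x - t, y - η)| +
        |U2 u (x + t, y - η)| := by linarith [abs_add_le (U2 u (x + t, y + η) + U2 u (x - t, y + η)) (U2 u (x - t, y - η))]
    _ ≤ |U2 u (x + t, y + η)| + |U2 u (x - t, y + η)| + |U2 u (x - t, y - η)| +
        |U2 u (x + t, y - η)| := by linarith [abs_add_le (U2 u (x + t, y + η)) (U2 u (x - t, y + η))]
    _ ≤ 4 * M := by linarith

end Abounds

lemma keyX (lam γ : ℝ) (hlam : 0 ≤ lam) (hγ0 : 0 < γ)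
    (u : ℝ × ℝ → ℝ) (hu : ContDiff ℝ 2 u) (M : ℝ)
    (hM : ∀ p : ℝ × ℝ, ‖iteratedFDeriv ℝ 2 u p‖ ≤ M) :
    ∃ C > 0, ∀ x y ξ η : ℝ, 0 < ξ → 0 < η →
      DifferentiableAt ℝ (fun t => phi u lam γ x y t η) ξ ∧
      DifferentiableAt ℝ (deriv (fun t => phi u lam γ x y t η)) ξ ∧
      |deriv (deriv (fun t => phi u lam γ x y t η)) ξ| ≤
        C * ((ξ ^ 2 + η ^ 2) ^ (-(γ / 2)) + (ξ ^ 2 + η ^ 2) ^ (1 / 2 - γ / 2) +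
          (ξ ^ 2 + η ^ 2) ^ (1 - γ / 2)) := by
  have hM0 : 0 ≤ M := le_trans (norm_nonneg _) (hM (0, 0))
  refine ⟨4*M + 8*M*γ + 4*M*γ*(γ+3) + 16*M*lam + 8*M*lam*γ + 4*M*lam^2 + 1,
    by positivity, ?_⟩
  intro x y ξ η hξ hη0
  have hη : η ≠ 0 := ne_of_gt hη0
  have hq : 0 < ξ ^ 2 + η ^ 2 := q_pos η ξ hη
  have hr : 0 < Rf η ξ := Rf_pos η ξ hη
  have hd1 : deriv (fun t => phi u lam γ x y t η) = Phid u lam γ x y η :=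
    funext fun t => (hasDerivAt_phi u hu lam γ x y η t hη).deriv
  refine ⟨(hasDerivAt_phi u hu lam γ x y η ξ hη).differentiableAt, ?_, ?_⟩
  · rw [hd1]; exact (hasDerivAt_Phid u hu lam γ x y η ξ hη).differentiableAt
  rw [hd1, (hasDerivAt_Phid u hu lam γ x y η ξ hη).deriv]
  have hBf := abs_Bf_le lam γ η ξ hlam hη
  have hBd := abs_Bd_le lam γ η ξ hlam hγ0 hη
  have hBdd := abs_Bdd_le lam γ η ξ hlam hγ0 hη
  have hA := abs_gfun_le u hu M hM x y η ξ
  have hAd := abs_Ad_le u hu M hM x y η ξ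
  have hAdd := abs_Add_le u hu M hM x y η ξ
  have hmulle : ∀ a b c d : ℝ, |a| ≤ c → |b| ≤ d → |a * b| ≤ c * d := by
    intro a b c d h1 h2
    rw [abs_mul]
    exact mul_le_mul h1 h2 (abs_nonneg _) (le_trans (abs_nonneg _) h1)
  set r := Rf η ξ with hrdef
  set p0 := (ξ ^ 2 + η ^ 2) ^ (-(γ / 2)) with hp0def
  set pm := (ξ ^ 2 + η ^ 2) ^ (-(γ / 2) - 1) with hpmdef
  set p2 := (ξ ^ 2 + η ^ 2) ^ (1 / 2 - γ / 2) with hp2def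
  set p3 := (ξ ^ 2 + η ^ 2) ^ (1 - γ / 2) with hp3def
  have hp0 : 0 ≤ p0 := Real.rpow_nonneg hq.le _
  have hpm : 0 ≤ pm := Real.rpow_nonneg hq.le _
  have hp2' : 0 ≤ p2 := Real.rpow_nonneg hq.le _
  have hp3' : 0 ≤ p3 := Real.rpow_nonneg hq.le _
  have key1 : |Phidd u lam γ x y η ξ| ≤
      4*M*p0 + (4*M*r)*(lam*p0 + γ*r*pm) +
      ((4*M*r)*(lam*p0 + γ*r*pm) +
        (4*M*(ξ^2+η^2))*((lam*lam + lam*(2/r))*p0 + 2*(lam*(γ*r*pm)) + γ*(γ+3)*pm)) := by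
    rw [Phidd]
    have k1 : |Add' u x y η ξ * Bf lam γ η ξ| ≤ (4*M)*p0 := hmulle _ _ _ _ hAdd hBf
    have k2 : |Ad u x y η ξ * Bd lam γ η ξ| ≤ (4*M*r)*(lam*p0 + γ*r*pm) :=
      hmulle _ _ _ _ hAd hBd
    have k3 : |gfun u x y ξ η * Bdd lam γ η ξ| ≤
        (4*M*(ξ^2+η^2))*((lam*lam + lam*(2/r))*p0 + 2*(lam*(γ*r*pm)) + γ*(γ+3)*pm) :=
      hmulle _ _ _ _ hA hBdd
    calc |Add' u x y η ξ * Bf lam γ η ξ + Ad u x y η ξ * Bd lam γ η ξ +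
          (Ad u x y η ξ * Bd lam γ η ξ + gfun u x y ξ η * Bdd lam γ η ξ)|
        ≤ |Add' u x y η ξ * Bf lam γ η ξ + Ad u x y η ξ * Bd lam γ η ξ| +
          |Ad u x y η ξ * Bd lam γ η ξ + gfun u x y ξ η * Bdd lam γ η ξ| := abs_add_le _ _
      _ ≤ (|Add' u x y η ξ * Bf lam γ η ξ| + |Ad u x y η ξ * Bd lam γ η ξ|) +
          (|Ad u x y η ξ * Bd lam γ η ξ| + |gfun u x y ξ η * Bdd lam γ η ξ|) :=
          add_le_add (abs_add_le _ _) (abs_add_le _ _)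
      _ ≤ _ := by linarith
  have hr2 : r * r = ξ ^ 2 + η ^ 2 := Real.mul_self_sqrt hq.le
  have hsp : (ξ ^ 2 + η ^ 2) * pm = p0 := by
    rw [hpmdef, hp0def, Real.rpow_sub_one hq.ne']
    field_simp
  have hp0e : p0 = (r * r) * pm := by rw [hr2, hsp]
  have hp2e : p2 = r * p0 := by
    rw [hp2def, hp0def, show (1 / 2 - γ / 2 : ℝ) = 1 / 2 + (-(γ / 2)) by ring,
      Real.rpow_add hq, hrdef, Rf, Real.sqrt_eq_rpow]
  have hp3e : p3 = (ξ ^ 2 + η ^ 2) * p0 := by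
    rw [hp3def, hp0def, show (1 - γ / 2 : ℝ) = 1 + (-(γ / 2)) by ring,
      Real.rpow_add hq, Real.rpow_one]
  have e_total : 4*M*p0 + (4*M*r)*(lam*p0 + γ*r*pm) +
      ((4*M*r)*(lam*p0 + γ*r*pm) +
        (4*M*(ξ^2+η^2))*((lam*lam + lam*(2/r))*p0 + 2*(lam*(γ*r*pm)) + γ*(γ+3)*pm)) =
      (4*M + 8*M*γ + 4*M*γ*(γ+3))*p0 + (16*M*lam + 8*M*lam*γ)*p2 + (4*M*lam^2)*p3 := by
    rw [hp2e, hp3e, ← hr2, hp0e]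
    field_simp
    ring
  refine le_trans key1 ?_
  rw [e_total]
  nlinarith [mul_nonneg (by positivity : (0:ℝ) ≤ 16*M*lam + 8*M*lam*γ + 4*M*lam^2 + 1) hp0,
    mul_nonneg (by positivity : (0:ℝ) ≤ 4*M + 8*M*γ + 4*M*γ*(γ+3) + 4*M*lam^2 + 1) hp2',
    mul_nonneg (by positivity : (0:ℝ) ≤ 4*M + 8*M*γ + 4*M*γ*(γ+3) + 16*M*lam + 8*M*lam*γ + 1) hp3']

noncomputable def swapIso : (ℝ × ℝ) ≃ₗᵢ[ℝ] (ℝ × ℝ) :=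
  ⟨LinearEquiv.prodComm ℝ ℝ ℝ, fun p => by
    simp [LinearEquiv.prodComm, Prod.norm_def, max_comm]; exact max_comm _ _⟩

/-- Second and third bounds of Lemma 2.1: existence and bounds of the
second partial derivatives of φ_γ in ξ and in η. -/
theorem phi_second_deriv_bound (lam γ : ℝ) (hlam : 0 ≤ lam)
    (hγ : γ ∈ Set.Ioc (0 : ℝ) 2)
    (u : ℝ × ℝ → ℝ) (hu : ContDiff ℝ 2 u)
    (hbdd : ∃ M : ℝ, ∀ p : ℝ × ℝ, ‖iteratedFDeriv ℝ 2 u p‖ ≤ M) :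
    ∃ C > 0, ∀ x y ξ η : ℝ, 0 < ξ → 0 < η →
      (DifferentiableAt ℝ (fun t => phi u lam γ x y t η) ξ ∧
        DifferentiableAt ℝ (deriv (fun t => phi u lam γ x y t η)) ξ ∧
        |deriv (deriv (fun t => phi u lam γ x y t η)) ξ| ≤
          C * ((ξ ^ 2 + η ^ 2) ^ (-(γ / 2)) + (ξ ^ 2 + η ^ 2) ^ (1 / 2 - γ / 2) +
            (ξ ^ 2 + η ^ 2) ^ (1 - γ / 2))) ∧
      (DifferentiableAt ℝ (fun t => phi u lam γ x y ξ t) η ∧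
        DifferentiableAt ℝ (deriv (fun t => phi u lam γ x y ξ t)) η ∧
        |deriv (deriv (fun t => phi u lam γ x y ξ t)) η| ≤
          C * ((ξ ^ 2 + η ^ 2) ^ (-(γ / 2)) + (ξ ^ 2 + η ^ 2) ^ (1 / 2 - γ / 2) +
            (ξ ^ 2 + η ^ 2) ^ (1 - γ / 2))) := by
  obtain ⟨M, hM⟩ := hbdd
  obtain ⟨hγ0, -⟩ := hγ
  set v : ℝ × ℝ → ℝ := u ∘ ⇑swapIso with hvdef
  have hv : ContDiff ℝ 2 v := hu.comp swapIso.contDiff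
  have hMv : ∀ p : ℝ × ℝ, ‖iteratedFDeriv ℝ 2 v p‖ ≤ M := fun p => by
    rw [hvdef, swapIso.norm_iteratedFDeriv_comp_right u p]
    exact hM _
  obtain ⟨C1, hC1, H1⟩ := keyX lam γ hlam hγ0 u hu M hM
  obtain ⟨C2, hC2, H2⟩ := keyX lam γ hlam hγ0 v hv M hMv
  refine ⟨C1 + C2, by linarith, fun x y ξ η hξ hη => ?_⟩
  have hq : 0 < ξ ^ 2 + η ^ 2 := by positivity
  have S_nonneg : 0 ≤ (ξ ^ 2 + η ^ 2) ^ (-(γ / 2)) + (ξ ^ 2 + η ^ 2) ^ (1 / 2 - γ / 2) +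
      (ξ ^ 2 + η ^ 2) ^ (1 - γ / 2) := by positivity
  constructor
  · obtain ⟨d1, d2, d3⟩ := H1 x y ξ η hξ hη
    refine ⟨d1, d2, le_trans d3 ?_⟩
    nlinarith [mul_nonneg hC2.le S_nonneg]
  · obtain ⟨d1, d2, d3⟩ := H2 y x η ξ hη hξ
    have hswap : ∀ a b : ℝ, v (a, b) = u (b, a) := fun a b => rfl
    have hfun : (fun t => phi u lam γ x y ξ t) = (fun t => phi v lam γ y x t ξ) := by
      funext t
      simp only [phi, gfun, hswap]
      ring_nf
    have hcomm : (η ^ 2 + ξ ^ 2 : ℝ) = ξ ^ 2 + η ^ 2 := add_comm _ _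
    rw [hcomm] at d3
    rw [hfun]
    refine ⟨d1, d2, le_trans d3 ?_⟩
    nlinarith [mul_nonneg hC1.le S_nonneg]
end

section
/- Let β ∈ (0,2) and γ ∈ (β,2]. There exists a constant C > 0 such that for all h > 0, ∫₀^h ∫₀^h ( (ξ²+η²)^{1−γ/2} + h^{2−γ} ) · (ξ²+η²)^{(γ−2−β)/2} dη dξ ≤ C·h^{2−β}. -/
open MeasureTheory Real Set

/-- Estimate of term I in the proof of Theorem 2.1: singular-cell error bound. -/
theorem singular_cell_estimate (β γ : ℝ) (hβ : β ∈ Set.Ioo (0 : ℝ) 2)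
    (hγ : γ ∈ Set.Ioc β 2) :
    ∃ C > 0, ∀ h : ℝ, 0 < h →
      (∫ p in Set.Ioo (0:ℝ) h ×ˢ Set.Ioo (0:ℝ) h,
        ((p.1 ^ 2 + p.2 ^ 2) ^ (1 - γ / 2) + h ^ (2 - γ)) *
          (p.1 ^ 2 + p.2 ^ 2) ^ ((γ - 2 - β) / 2)) ≤ C * h ^ (2 - β) := by
  obtain ⟨hβ0, hβ2⟩ := hβ
  obtain ⟨hγβ, hγ2⟩ := hγ
  set g : ℝ × ℝ → ℝ := fun q =>
    ((q.1 ^ 2 + q.2 ^ 2) ^ (1 - γ / 2) + 1) * (q.1 ^ 2 + q.2 ^ 2) ^ ((γ - 2 - β) / 2) with hgdef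
  set I : ℝ := ∫ q in Set.Ioo (0:ℝ) 1 ×ˢ Set.Ioo (0:ℝ) 1, g q with hIdef
  have hInn : 0 ≤ I := by
    apply integral_nonneg
    intro q
    exact mul_nonneg (by positivity) (by positivity)
  refine ⟨I + 1, by linarith, ?_⟩
  intro h hh
  set f : ℝ × ℝ → ℝ := fun p =>
    ((p.1 ^ 2 + p.2 ^ 2) ^ (1 - γ / 2) + h ^ (2 - γ)) *
      (p.1 ^ 2 + p.2 ^ 2) ^ ((γ - 2 - β) / 2) with hfdef
  have hSh : MeasurableSet (Set.Ioo (0:ℝ) h ×ˢ Set.Ioo (0:ℝ) h) :=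
    measurableSet_Ioo.prod measurableSet_Ioo
  have hS1 : MeasurableSet (Set.Ioo (0:ℝ) 1 ×ˢ Set.Ioo (0:ℝ) 1) :=
    measurableSet_Ioo.prod measurableSet_Ioo
  have h2 : ∀ s : ℝ, ((h : ℝ) ^ 2) ^ s = h ^ (2 * s) := by
    intro s
    rw [← Real.rpow_natCast h 2, ← Real.rpow_mul hh.le]
    norm_num
  -- membership equivalence
  have hmem : ∀ y : ℝ × ℝ,
      h • y ∈ Set.Ioo (0:ℝ) h ×ˢ Set.Ioo (0:ℝ) h ↔
        y ∈ Set.Ioo (0:ℝ) 1 ×ˢ Set.Ioo (0:ℝ) 1 := by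
    intro y
    have e1 : (h • y).1 = h * y.1 := rfl
    have e2 : (h • y).2 = h * y.2 := rfl
    simp only [Set.mem_prod, Set.mem_Ioo, e1, e2]
    rw [mul_pos_iff_of_pos_left hh, mul_pos_iff_of_pos_left hh,
      mul_lt_iff_lt_one_right hh, mul_lt_iff_lt_one_right hh]
  -- pointwise scaling identity
  have key : (fun y : ℝ × ℝ =>
        (Set.Ioo (0:ℝ) h ×ˢ Set.Ioo (0:ℝ) h).indicator f (h • y)) =
      (Set.Ioo (0:ℝ) 1 ×ˢ Set.Ioo (0:ℝ) 1).indicator (fun y => h ^ (-β) * g y) := by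
    funext y
    by_cases hy : y ∈ Set.Ioo (0:ℝ) 1 ×ˢ Set.Ioo (0:ℝ) 1
    · rw [Set.indicator_of_mem hy, Set.indicator_of_mem ((hmem y).mpr hy)]
      obtain ⟨⟨hy1, _⟩, ⟨hy2, _⟩⟩ := hy
      have ht : (0:ℝ) < y.1 ^ 2 + y.2 ^ 2 := by positivity
      have e1 : (h • y).1 = h * y.1 := rfl
      have e2 : (h • y).2 = h * y.2 := rfl
      have hsum : (h • y).1 ^ 2 + (h • y).2 ^ 2 = h ^ 2 * (y.1 ^ 2 + y.2 ^ 2) := by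
        rw [e1, e2]; ring
      simp only [hfdef, hgdef]
      rw [hsum, Real.mul_rpow (by positivity) ht.le, Real.mul_rpow (by positivity) ht.le,
        h2, h2]
      have hexp1 : 2 * (1 - γ / 2) = 2 - γ := by ring
      have hexp2 : 2 * ((γ - 2 - β) / 2) = γ - 2 - β := by ring
      rw [hexp1, hexp2]
      have hpow : h ^ (2 - γ) * h ^ (γ - 2 - β) = h ^ (-β) := by
        rw [← Real.rpow_add hh]; ring_nf
      calc (h ^ (2 - γ) * (y.1 ^ 2 + y.2 ^ 2) ^ (1 - γ / 2) + h ^ (2 - γ)) *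
            (h ^ (γ - 2 - β) * (y.1 ^ 2 + y.2 ^ 2) ^ ((γ - 2 - β) / 2))
          = (h ^ (2 - γ) * h ^ (γ - 2 - β)) *
              (((y.1 ^ 2 + y.2 ^ 2) ^ (1 - γ / 2) + 1) *
                (y.1 ^ 2 + y.2 ^ 2) ^ ((γ - 2 - β) / 2)) := by ring
        _ = h ^ (-β) * (((y.1 ^ 2 + y.2 ^ 2) ^ (1 - γ / 2) + 1) *
              (y.1 ^ 2 + y.2 ^ 2) ^ ((γ - 2 - β) / 2)) := by rw [hpow]
    · rw [Set.indicator_of_notMem hy,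
        Set.indicator_of_notMem (fun hc => hy ((hmem y).mp hc))]
  -- scaling of the integral
  have hcomp := MeasureTheory.Measure.integral_comp_smul (μ := (volume : Measure (ℝ × ℝ)))
    (fun x => (Set.Ioo (0:ℝ) h ×ˢ Set.Ioo (0:ℝ) h).indicator f x) h
  have hfr : (Module.finrank ℝ (ℝ × ℝ)) = 2 := by
    simp [Module.finrank_prod]
  rw [hfr] at hcomp
  rw [key] at hcomp
  have hrhs : (∫ x, (Set.Ioo (0:ℝ) 1 ×ˢ Set.Ioo (0:ℝ) 1).indicator
      (fun y => h ^ (-β) * g y) x) = h ^ (-β) * I := by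
    rw [integral_indicator hS1, hIdef, MeasureTheory.integral_const_mul]
  rw [hrhs] at hcomp
  have habs : |((h ^ 2 : ℝ))⁻¹| = (h ^ 2)⁻¹ := abs_of_pos (by positivity)
  rw [habs, smul_eq_mul] at hcomp
  have hmain : (∫ p in Set.Ioo (0:ℝ) h ×ˢ Set.Ioo (0:ℝ) h, f p) = h ^ (2 - β) * I := by
    rw [← integral_indicator hSh]
    have : (∫ x, (Set.Ioo (0:ℝ) h ×ˢ Set.Ioo (0:ℝ) h).indicator f x) =
        h ^ 2 * (h ^ (-β) * I) := by
      field_simp at hcomp ⊢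
      linarith [hcomp]
    rw [this]
    have : (h : ℝ) ^ 2 * h ^ (-β) = h ^ (2 - β) := by
      rw [← Real.rpow_natCast h 2, ← Real.rpow_add hh]
      norm_num [sub_eq_add_neg]
    rw [← mul_assoc, this]
  rw [hmain]
  have hpos : (0:ℝ) ≤ h ^ (2 - β) := Real.rpow_nonneg hh.le _
  nlinarith
end

section
/- Let β > 0, r₁ > 0 and (x,y) ∈ ℝ². Let A₁ = [x−r₁, x+r₁] × [y−r₁, y+r₁]. Then ∫∫_{ℝ² ∖ A₁} ((x−ξ)²+(y−η)²)^{−(2+β)/2} dξ dη = (8/β)·∫₀^{π/4} (r₁/cos θ)^{−β} dθ. -/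
open MeasureTheory Real Set

private theorem aux_lintegral_polar (f : ℝ × ℝ → ENNReal) :
    (∫⁻ p in polarCoord.target, ENNReal.ofReal p.1 * f (polarCoord.symm p)) = ∫⁻ p, f p := by
  set B : ℝ × ℝ → ℝ × ℝ →L[ℝ] ℝ × ℝ := fun p =>
    LinearMap.toContinuousLinearMap (Matrix.toLin (Module.Basis.finTwoProd ℝ) (Module.Basis.finTwoProd ℝ)
      !![Real.cos p.2, -p.1 * Real.sin p.2; Real.sin p.2, p.1 * Real.cos p.2])
  have A : ∀ p ∈ polarCoord.target, HasFDerivWithinAt polarCoord.symm (B p) polarCoord.target p :=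
    fun p _ => (hasFDerivAt_polarCoord_symm p).hasFDerivWithinAt
  have B_det : ∀ p, (B p).det = p.1 := by
    intro p
    conv_rhs => rw [← one_mul p.1, ← cos_sq_add_sin_sq p.2]
    simp only [B, neg_mul, LinearMap.det_toContinuousLinearMap, LinearMap.det_toLin,
      Matrix.det_fin_two_of, sub_neg_eq_add]
    ring
  symm
  calc
    ∫⁻ p, f p = ∫⁻ p in polarCoord.source, f p := by
      rw [← setLIntegral_univ]
      exact (setLIntegral_congr polarCoord_source_ae_eq_univ).symm
    _ = ∫⁻ p in polarCoord.symm '' polarCoord.target, f p := by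
      rw [polarCoord.symm_image_target_eq_source]
    _ = ∫⁻ p in polarCoord.target, ENNReal.ofReal |(B p).det| * f (polarCoord.symm p) :=
      lintegral_image_eq_lintegral_abs_det_fderiv_mul volume
        polarCoord.open_target.measurableSet A polarCoord.symm.injOn f
    _ = ∫⁻ p in polarCoord.target, ENNReal.ofReal p.1 * f (polarCoord.symm p) := by
      refine setLIntegral_congr_fun polarCoord.open_target.measurableSet
        (fun p hp => ?_)
      rw [B_det, abs_of_pos hp.1]

private theorem aux_mpos (θ : ℝ) : 0 < max |Real.cos θ| |Real.sin θ| := by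
  rcases eq_or_ne (Real.cos θ) 0 with hc | hc
  · have hs : Real.sin θ ≠ 0 := by
      intro hs
      have := Real.sin_sq_add_cos_sq θ
      rw [hs, hc] at this; norm_num at this
    exact lt_max_of_lt_right (abs_pos.2 hs)
  · exact lt_max_of_lt_left (abs_pos.2 hc)

private theorem aux_oneD (β r₁ : ℝ) (hr : 0 < r₁) :
    ∫ θ in (-π)..π, (r₁ / max |Real.cos θ| |Real.sin θ|) ^ (-β)
      = 8 * ∫ θ in (0:ℝ)..(π/4), (r₁ / Real.cos θ) ^ (-β) := by
  set h : ℝ → ℝ := fun θ => (r₁ / max |Real.cos θ| |Real.sin θ|) ^ (-β) with hh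
  have hcont : Continuous h := by
    apply Continuous.rpow_const
    · exact (continuous_const.div
        ((continuous_cos.abs.max continuous_sin.abs)) (fun θ => (aux_mpos θ).ne'))
    · intro θ
      exact Or.inl (div_pos hr (aux_mpos θ)).ne'
  have hint : ∀ a b : ℝ, IntervalIntegrable h volume a b := fun a b =>
    hcont.intervalIntegrable a b
  have hper : Function.Periodic h (π/2) := by
    intro θ
    simp only [hh]
    rw [Real.cos_add_pi_div_two, Real.sin_add_pi_div_two, abs_neg, max_comm]
  have h4 : ∫ θ in (-π)..π, h θ = 4 * ∫ θ in (0:ℝ)..(π/2), h θ := by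
    have key := hper.intervalIntegral_add_zsmul_eq 4 (-π) hint
    rw [show -π + (4:ℤ) • (π/2) = π by rw [zsmul_eq_mul]; push_cast; ring] at key
    have k2 := hper.intervalIntegral_add_eq (-π) 0
    rw [zero_add] at k2
    rw [key, k2, zsmul_eq_mul]
    push_cast; ring
  have hrefl : ∀ θ, h (π/2 - θ) = h θ := by
    intro θ
    simp only [hh]
    rw [Real.cos_pi_div_two_sub, Real.sin_pi_div_two_sub, max_comm]
  have h2 : ∫ θ in (0:ℝ)..(π/2), h θ = 2 * ∫ θ in (0:ℝ)..(π/4), h θ := by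
    have hs : ∫ θ in (π/4:ℝ)..(π/2), h θ = ∫ θ in (0:ℝ)..(π/4), h θ := by
      have := intervalIntegral.integral_comp_sub_left (a := (0:ℝ)) (b := π/4) h (π/2)
      rw [show π/2 - π/4 = π/4 by ring, show π/2 - 0 = π/2 by ring] at this
      rw [← this]
      exact intervalIntegral.integral_congr fun θ _ => hrefl θ
    rw [← intervalIntegral.integral_add_adjacent_intervals (hint 0 (π/4)) (hint (π/4) (π/2)),
      hs]
    ring
  have hcos : ∫ θ in (0:ℝ)..(π/4), h θ = ∫ θ in (0:ℝ)..(π/4), (r₁ / Real.cos θ) ^ (-β) := by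
    apply intervalIntegral.integral_congr
    intro θ hθ
    rw [uIcc_of_le (by positivity)] at hθ
    obtain ⟨h0, h1⟩ := hθ
    have hπ : θ ≤ π/2 := h1.trans (by linarith [pi_pos])
    have hcn : 0 ≤ Real.cos θ := Real.cos_nonneg_of_mem_Icc ⟨by linarith, hπ⟩
    have hsn : 0 ≤ Real.sin θ := Real.sin_nonneg_of_nonneg_of_le_pi h0 (by linarith [pi_pos])
    have hsc : Real.sin θ ≤ Real.cos θ := by
      rw [← Real.sin_pi_div_two_sub]
      apply Real.strictMonoOn_sin.monotoneOn
      · constructor <;> [linarith; linarith]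
      · constructor <;> [linarith; linarith]
      · linarith
    simp only [hh]
    rw [abs_of_nonneg hcn, abs_of_nonneg hsn, max_eq_left hsc]
  rw [h4, h2, hcos]; ring

private theorem aux_radial (β c : ℝ) (hβ : 0 < β) (hc : 0 < c) :
    ∫⁻ r in Ioi c, ENNReal.ofReal (r * r ^ (-(2+β))) = ENNReal.ofReal ((1/β) * c ^ (-β)) := by
  have hcong : ∀ r ∈ Ioi c, ENNReal.ofReal (r * r ^ (-(2+β))) = ENNReal.ofReal (r ^ (-(1+β))) := by
    intro r hr
    have hr0 : 0 < r := hc.trans hr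
    rw [show r * r ^ (-(2+β)) = r ^ (1:ℝ) * r ^ (-(2+β)) by rw [Real.rpow_one],
      ← Real.rpow_add hr0, show (1:ℝ) + -(2+β) = -(1+β) by ring]
  rw [setLIntegral_congr_fun measurableSet_Ioi hcong,
    ← ofReal_integral_eq_lintegral_ofReal
      (integrableOn_Ioi_rpow_of_lt (by linarith) hc)
      ((ae_restrict_iff' measurableSet_Ioi).2 (Filter.Eventually.of_forall
        fun r hr => Real.rpow_nonneg (hc.trans hr).le _))]
  rw [integral_Ioi_rpow_of_lt (by linarith) hc]
  congr 1
  rw [show -(1+β) + 1 = -β by ring]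
  field_simp

private theorem aux_key (β r₁ : ℝ) (hβ : 0 < β) (hr : 0 < r₁) :
    ∫⁻ p : ℝ × ℝ in (Icc (-r₁) r₁ ×ˢ Icc (-r₁) r₁)ᶜ,
      ENNReal.ofReal ((p.1 ^ 2 + p.2 ^ 2) ^ (-((2 + β) / 2)))
    = ENNReal.ofReal ((8 / β) * ∫ θ in (0:ℝ)..(π/4), (r₁ / Real.cos θ) ^ (-β)) := by
  set m : ℝ → ℝ := fun θ => max |Real.cos θ| |Real.sin θ| with hm
  have hmcont : Continuous m := continuous_cos.abs.max continuous_sin.abs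
  set T : Set (ℝ × ℝ) := Icc (-r₁) r₁ ×ˢ Icc (-r₁) r₁ with hT
  have hTm : MeasurableSet Tᶜ := (measurableSet_Icc.prod measurableSet_Icc).compl
  set F : ℝ × ℝ → ENNReal :=
    fun q => (Tᶜ).indicator (fun q => ENNReal.ofReal ((q.1 ^ 2 + q.2 ^ 2) ^ (-((2 + β) / 2)))) q
    with hF
  set G : ℝ × ℝ → ENNReal :=
    fun p => {q : ℝ × ℝ | r₁ / m q.2 < q.1}.indicator
      (fun q => ENNReal.ofReal (q.1 * q.1 ^ (-(2 + β)))) p with hG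
  have step1 : ∫⁻ p in Tᶜ, ENNReal.ofReal ((p.1 ^ 2 + p.2 ^ 2) ^ (-((2 + β) / 2)))
      = ∫⁻ p, F p := (lintegral_indicator hTm _).symm
  have step2 : ∫⁻ p, F p = ∫⁻ p in polarCoord.target, ENNReal.ofReal p.1 * F (polarCoord.symm p) :=
    (aux_lintegral_polar F).symm
  have step3 : ∫⁻ p in polarCoord.target, ENNReal.ofReal p.1 * F (polarCoord.symm p)
      = ∫⁻ p in Ioi (0:ℝ) ×ˢ Ioo (-π) π, G p := by
    rw [polarCoord_target]
    refine setLIntegral_congr_fun ((measurableSet_Ioi).prod measurableSet_Ioo)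
      (fun p hp => ?_)
    obtain ⟨hp1, hp2⟩ := hp
    have hp1' : (0:ℝ) < p.1 := hp1
    have hsymm : polarCoord.symm p = (p.1 * Real.cos p.2, p.1 * Real.sin p.2) := rfl
    have hmemT : (polarCoord.symm p ∈ T) ↔ p.1 ≤ r₁ / m p.2 := by
      rw [hsymm, hT, le_div_iff₀ (aux_mpos p.2)]
      rw [mem_prod, mem_Icc, mem_Icc, ← abs_le, ← abs_le, abs_mul, abs_mul, abs_of_pos hp1',
        ← max_le_iff, ← mul_max_of_nonneg _ _ hp1'.le]
    have hmem : (polarCoord.symm p ∈ Tᶜ) ↔ r₁ / m p.2 < p.1 := by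
      rw [mem_compl_iff, hmemT, not_le]
    by_cases hc : r₁ / m p.2 < p.1
    · have hcG : p ∈ {q : ℝ × ℝ | r₁ / m q.2 < q.1} := hc
      have hval : ((polarCoord.symm p).1 ^ 2 + (polarCoord.symm p).2 ^ 2) ^ (-((2 + β) / 2))
          = p.1 ^ (-(2 + β)) := by
        rw [hsymm]
        have hbase : (p.1 * Real.cos p.2) ^ 2 + (p.1 * Real.sin p.2) ^ 2 = p.1 ^ 2 := by
          have := Real.sin_sq_add_cos_sq p.2
          nlinarith [this]
        show ((p.1 * Real.cos p.2) ^ 2 + (p.1 * Real.sin p.2) ^ 2) ^ (-((2 + β) / 2)) = _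
        rw [hbase, ← Real.rpow_natCast p.1 2, ← Real.rpow_mul hp1'.le]
        norm_num
        congr 1
        ring
      simp only [hF, hG]
      rw [Set.indicator_of_mem (hmem.2 hc), Set.indicator_of_mem hcG, hval,
        ← ENNReal.ofReal_mul hp1'.le]
    · have hcG : p ∉ {q : ℝ × ℝ | r₁ / m q.2 < q.1} := hc
      simp only [hF, hG]
      rw [Set.indicator_of_notMem (fun hmm => hc (hmem.1 hmm)),
        Set.indicator_of_notMem hcG, mul_zero]
  have hGmeas : Measurable G := by
    apply Measurable.indicator
    · fun_prop
    · exact measurableSet_lt ((measurable_const.div (hmcont.measurable.comp measurable_snd)))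
        measurable_fst
  have step4 : ∫⁻ p in Ioi (0:ℝ) ×ˢ Ioo (-π) π, G p
      = ∫⁻ θ in Ioo (-π) π, ∫⁻ r in Ioi (0:ℝ), G (r, θ) := by
    rw [Measure.volume_eq_prod, ← Measure.prod_restrict,
      lintegral_prod_symm _ hGmeas.aemeasurable]
  have step5 : ∀ θ : ℝ, ∫⁻ r in Ioi (0:ℝ), G (r, θ)
      = ENNReal.ofReal ((1/β) * (r₁ / m θ) ^ (-β)) := by
    intro θ
    have hc : 0 < r₁ / m θ := div_pos hr (aux_mpos θ)
    have hfun : (fun r => G (r, θ))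
        = (Ioi (r₁ / m θ)).indicator (fun r => ENNReal.ofReal (r * r ^ (-(2 + β)))) := by
      ext r
      by_cases hrθ : r₁ / m θ < r
      · rw [hG]
        simp only [indicator_of_mem (show (r, θ) ∈ {q : ℝ × ℝ | r₁ / m q.2 < q.1} from hrθ),
          indicator_of_mem (mem_Ioi.2 hrθ)]
      · rw [hG]
        simp only [indicator_of_notMem (show (r, θ) ∉ {q : ℝ × ℝ | r₁ / m q.2 < q.1} from hrθ),
          indicator_of_notMem (fun hmm => hrθ (mem_Ioi.1 hmm))]
    rw [show ∫⁻ r in Ioi (0:ℝ), G (r, θ) = ∫⁻ r in Ioi (0:ℝ),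
        (Ioi (r₁ / m θ)).indicator (fun r => ENNReal.ofReal (r * r ^ (-(2 + β)))) r from
      by rw [hfun]]
    rw [lintegral_indicator measurableSet_Ioi, Measure.restrict_restrict measurableSet_Ioi,
      inter_eq_left.2 (Ioi_subset_Ioi hc.le)]
    exact aux_radial β (r₁ / m θ) hβ hc
  have hcont2 : Continuous (fun θ => (1/β) * (r₁ / m θ) ^ (-β)) := by
    apply Continuous.mul continuous_const
    apply Continuous.rpow_const
    · exact continuous_const.div hmcont (fun θ => (aux_mpos θ).ne')
    · intro θ; exact Or.inl (div_pos hr (aux_mpos θ)).ne'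
  have step6 : ∫⁻ θ in Ioo (-π) π, ENNReal.ofReal ((1/β) * (r₁ / m θ) ^ (-β))
      = ENNReal.ofReal (∫ θ in Ioo (-π) π, (1/β) * (r₁ / m θ) ^ (-β)) := by
    rw [← ofReal_integral_eq_lintegral_ofReal
      (hcont2.integrableOn_Icc.mono_set Ioo_subset_Icc_self)
      (Filter.Eventually.of_forall fun θ =>
        mul_nonneg (by positivity) (Real.rpow_nonneg (div_pos hr (aux_mpos θ)).le _))]
  rw [step1, step2, step3, step4]
  simp_rw [step5]
  rw [step6]
  congr 1
  rw [← integral_Ioc_eq_integral_Ioo, ← intervalIntegral.integral_of_le (by linarith [pi_pos]),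
    intervalIntegral.integral_const_mul, aux_oneD β r₁ hr]
  ring

/-- The λ = 0 case of the exterior-of-a-square kernel integral in Appendix A. -/
theorem exterior_square_kernel_integral_untempered (β r₁ x y : ℝ)
    (hβ : 0 < β) (hr : 0 < r₁) :
    (∫ p in (Set.Icc (x - r₁) (x + r₁) ×ˢ Set.Icc (y - r₁) (y + r₁))ᶜ,
        ((x - p.1) ^ 2 + (y - p.2) ^ 2) ^ (-((2 + β) / 2))) =
      (8 / β) * ∫ θ in (0 : ℝ)..(π / 4), (r₁ / Real.cos θ) ^ (-β) := by
  set K : Set (ℝ × ℝ) := Set.Icc (x - r₁) (x + r₁) ×ˢ Set.Icc (y - r₁) (y + r₁) with hK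
  set T : Set (ℝ × ℝ) := Icc (-r₁) r₁ ×ˢ Icc (-r₁) r₁ with hT
  have hKm : MeasurableSet Kᶜ := (measurableSet_Icc.prod measurableSet_Icc).compl
  have hTm : MeasurableSet Tᶜ := (measurableSet_Icc.prod measurableSet_Icc).compl
  set R : ℝ := (8 / β) * ∫ θ in (0 : ℝ)..(π / 4), (r₁ / Real.cos θ) ^ (-β) with hR
  have hRnn : 0 ≤ R := by
    apply mul_nonneg (by positivity)
    apply intervalIntegral.integral_nonneg (by positivity)
    intro θ hθ
    have : 0 ≤ Real.cos θ := Real.cos_nonneg_of_mem_Icc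
      ⟨by linarith [hθ.1, pi_pos], by linarith [hθ.2, pi_pos]⟩
    exact Real.rpow_nonneg (div_nonneg hr.le this) _
  have hmeas : Measurable (fun p : ℝ × ℝ => ((x - p.1) ^ 2 + (y - p.2) ^ 2) ^ (-((2 + β) / 2))) := by
    fun_prop
  have hnn : ∀ p : ℝ × ℝ, 0 ≤ ((x - p.1) ^ 2 + (y - p.2) ^ 2) ^ (-((2 + β) / 2)) := fun p =>
    Real.rpow_nonneg (by positivity) _
  rw [integral_eq_lintegral_of_nonneg_ae (Filter.Eventually.of_forall fun p => hnn p)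
    hmeas.aestronglyMeasurable]
  have htrans : ∫⁻ p in Kᶜ, ENNReal.ofReal (((x - p.1) ^ 2 + (y - p.2) ^ 2) ^ (-((2 + β) / 2)))
      = ∫⁻ p in Tᶜ, ENNReal.ofReal ((p.1 ^ 2 + p.2 ^ 2) ^ (-((2 + β) / 2))) := by
    rw [← lintegral_indicator hKm, ← lintegral_indicator hTm]
    have hshift := lintegral_add_right_eq_self (μ := volume)
      (fun q : ℝ × ℝ => (Tᶜ).indicator
        (fun q => ENNReal.ofReal ((q.1 ^ 2 + q.2 ^ 2) ^ (-((2 + β) / 2)))) q) (-x, -y)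
    rw [← hshift]
    apply lintegral_congr
    intro p
    have hmem : p ∈ K ↔ p + (-x, -y) ∈ T := by
      simp only [hK, hT, mem_prod, mem_Icc, Prod.fst_add, Prod.snd_add]
      constructor
      · rintro ⟨⟨h1, h2⟩, h3, h4⟩
        exact ⟨⟨by linarith, by linarith⟩, by linarith, by linarith⟩
      · rintro ⟨⟨h1, h2⟩, h3, h4⟩
        exact ⟨⟨by linarith, by linarith⟩, by linarith, by linarith⟩
    by_cases hp : p ∈ K
    · have h1 : p ∉ Kᶜ := by simp [hp]
      have h2 : p + ((-x : ℝ), (-y : ℝ)) ∉ Tᶜ := by simp [hmem.1 hp]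
      rw [Set.indicator_of_notMem h1, Set.indicator_of_notMem h2]
    · have h1 : p ∈ Kᶜ := hp
      have h2 : p + ((-x : ℝ), (-y : ℝ)) ∈ Tᶜ := by
        simp only [mem_compl_iff]
        exact fun hc => hp (hmem.2 hc)
      rw [Set.indicator_of_mem h1, Set.indicator_of_mem h2]
      congr 1
      have h1 : (p + ((-x : ℝ), (-y : ℝ))).1 = p.1 - x := by
        simp [Prod.fst_add]; ring
      have h2 : (p + ((-x : ℝ), (-y : ℝ))).2 = p.2 - y := by
        simp [Prod.snd_add]; ring
      rw [h1, h2]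
      ring_nf
  rw [htrans, aux_key β r₁ hβ hr]
  exact ENNReal.toReal_ofReal hRnn
end

section
/- Let β ∈ (0,2), λ ≥ 0, γ ∈ (β,2], and let u ∈ C²(ℝ²) have bounded second-order partial derivatives. Fix (x,y) ∈ ℝ² and h > 0, and let ξ₀ = η₀ = 0, ξ₁ = η₁ = h. Then for γ ∈ (β,2), the four-point weighted trapezoidal approximation on the singular cell reads ∫₀^h∫₀^h φ_γ(ξ,η)(ξ²+η²)^{(γ−2−β)/2} dη dξ ≈ (1/4)·(lim_{(ξ,η)→(0,0)} φ_γ(ξ,η) + φ_γ(0,h) + φ_γ(h,h) + φ_γ(h,0))·G₀,₀ with lim_{(ξ,η)→(0,0)} φ_γ(ξ,η) = 0, and there is a constant C > 0 (independent of h and (x,y)) such that |∫₀^h∫₀^h φ_γ(ξ,η)(ξ²+η²)^{(γ−2−β)/2} dη dξ − (1/4)(φ_γ(0,h)+φ_γ(h,h)+φ_γ(h,0))·G₀,₀| ≤ C·h^{2−β}, where G₀,₀ = ∫₀^h∫₀^h (ξ²+η²)^{(γ−2−β)/2} dη dξ. -/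
open MeasureTheory Real Set Filter Topology

/-- Second difference bound for a C² function with bounded second derivative. -/
lemma second_diff_bound_s19 (u : ℝ × ℝ → ℝ) (hu : ContDiff ℝ 2 u) (M : ℝ)
    (hM : ∀ p : ℝ × ℝ, ‖iteratedFDeriv ℝ 2 u p‖ ≤ M) (a v : ℝ × ℝ) :
    |u (a + v) + u (a - v) - 2 * u a| ≤ 2 * M * ‖v‖ ^ 2 := by
  have hdu : Differentiable ℝ u := hu.differentiable (by norm_num)
  have hd1 : ContDiff ℝ 1 (fderiv ℝ u) := hu.fderiv_right (by norm_num)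
  have hbd : ∀ z : ℝ × ℝ, ‖fderiv ℝ (fderiv ℝ u) z‖ ≤ M := by
    intro z
    have e0 : ‖iteratedFDeriv ℝ 0 (fderiv ℝ (fderiv ℝ u)) z‖
        = ‖fderiv ℝ (fderiv ℝ u) z‖ := norm_iteratedFDeriv_zero
    have e1 : ‖iteratedFDeriv ℝ 0 (fderiv ℝ (fderiv ℝ u)) z‖
        = ‖iteratedFDeriv ℝ 1 (fderiv ℝ u) z‖ := by
      simpa using (norm_iteratedFDeriv_fderiv (f := fderiv ℝ u) (n := 0) (x := z))
    have e2 : ‖iteratedFDeriv ℝ 1 (fderiv ℝ u) z‖ = ‖iteratedFDeriv ℝ 2 u z‖ :=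
      norm_iteratedFDeriv_fderiv (f := u) (n := 1) (x := z)
    rw [← e0, e1, e2]; exact hM z
  have hlip : ∀ p q : ℝ × ℝ, ‖fderiv ℝ u p - fderiv ℝ u q‖ ≤ M * ‖p - q‖ := by
    intro p q
    exact convex_univ.norm_image_sub_le_of_norm_fderiv_le
      (fun z _ => (hd1.differentiable (by norm_num)).differentiableAt)
      (fun z _ => hbd z) (mem_univ q) (mem_univ p)
  set φ : ℝ → ℝ := fun t => u (a + t • v) + u (a - t • v) with hφ
  have hder : ∀ t : ℝ, HasDerivAt φ
      (fderiv ℝ u (a + t • v) v - fderiv ℝ u (a - t • v) v) t := by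
    intro t
    have h1 : HasDerivAt (fun t : ℝ => a + t • v) v t := by
      simpa using ((hasDerivAt_id t).smul_const v).const_add a
    have h2 : HasDerivAt (fun t : ℝ => a - t • v) (-v) t := by
      have := ((hasDerivAt_id t).smul_const (-v)).const_add a
      simpa [smul_neg, sub_eq_add_neg] using this
    have H1 := (hdu (a + t • v)).hasFDerivAt.comp_hasDerivAt t h1
    have H2 := (hdu (a - t • v)).hasFDerivAt.comp_hasDerivAt t h2
    have := H1.add H2
    simpa [Function.comp_def, map_neg, sub_eq_add_neg, hφ, Pi.add_def] using this
  have hM0 : 0 ≤ M := le_trans (norm_nonneg _) (hM 0)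
  have key : ‖φ 1 - φ 0‖ ≤ 2 * M * ‖v‖ ^ 2 * ‖(1 : ℝ) - 0‖ := by
    apply (convex_Icc (0:ℝ) 1).norm_image_sub_le_of_norm_hasDerivWithin_le
      (f' := fun t => fderiv ℝ u (a + t • v) v - fderiv ℝ u (a - t • v) v)
      (fun t _ => (hder t).hasDerivWithinAt) ?_ (by norm_num) (by norm_num)
    intro t ht
    have h1 : ‖fderiv ℝ u (a + t • v) v - fderiv ℝ u (a - t • v) v‖
        ≤ ‖fderiv ℝ u (a + t • v) - fderiv ℝ u (a - t • v)‖ * ‖v‖ := by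
      have := (fderiv ℝ u (a + t • v) - fderiv ℝ u (a - t • v)).le_opNorm v
      simpa using this
    have h2 : ‖fderiv ℝ u (a + t • v) - fderiv ℝ u (a - t • v)‖
        ≤ M * ‖(a + t • v) - (a - t • v)‖ := hlip _ _
    have h3 : (a + t • v) - (a - t • v) = (2 * t) • v := by
      rw [two_mul, add_smul]; abel
    have h4 : ‖(2 * t) • v‖ = (2 * t) * ‖v‖ := by
      rw [norm_smul, Real.norm_eq_abs, abs_of_nonneg (by nlinarith [ht.1] : (0:ℝ) ≤ 2 * t)]
    have h5 : (2 * t) * ‖v‖ ≤ 2 * ‖v‖ := by nlinarith [ht.2, norm_nonneg v]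
    calc ‖fderiv ℝ u (a + t • v) v - fderiv ℝ u (a - t • v) v‖
        ≤ (M * ‖(a + t • v) - (a - t • v)‖) * ‖v‖ := le_trans h1 (by
          have := norm_nonneg v; nlinarith [h2, norm_nonneg (fderiv ℝ u (a + t • v) - fderiv ℝ u (a - t • v))])
      _ = M * ((2 * t) * ‖v‖) * ‖v‖ := by rw [h3, h4]
      _ ≤ M * (2 * ‖v‖) * ‖v‖ := by nlinarith [mul_nonneg (mul_nonneg hM0 (norm_nonneg v)) (sub_nonneg.mpr h5)]
      _ = 2 * M * ‖v‖ ^ 2 := by ring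
  have hφ1 : φ 1 = u (a + v) + u (a - v) := by simp [hφ]
  have hφ0 : φ 0 = 2 * u a := by simp [hφ]; ring
  rw [hφ1, hφ0] at key
  simpa [Real.norm_eq_abs, abs_sub_comm] using key.trans_eq (by simp)

lemma gfun_bound (u : ℝ × ℝ → ℝ) (hu : ContDiff ℝ 2 u) (M : ℝ)
    (hM : ∀ p : ℝ × ℝ, ‖iteratedFDeriv ℝ 2 u p‖ ≤ M) (x y ξ η : ℝ) :
    |gfun u x y ξ η| ≤ 4 * M * (ξ ^ 2 + η ^ 2) := by
  have hM0 : 0 ≤ M := le_trans (norm_nonneg _) (hM 0)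
  have h1 := second_diff_bound_s19 u hu M hM (x, y) (ξ, η)
  have h2 := second_diff_bound_s19 u hu M hM (x, y) (-ξ, η)
  have e1 : ((x, y) : ℝ × ℝ) + (ξ, η) = (x + ξ, y + η) := rfl
  have e2 : ((x, y) : ℝ × ℝ) - (ξ, η) = (x - ξ, y - η) := rfl
  have e3 : ((x, y) : ℝ × ℝ) + (-ξ, η) = (x - ξ, y + η) := by
    simp [Prod.ext_iff, sub_eq_add_neg]
  have e4 : ((x, y) : ℝ × ℝ) - (-ξ, η) = (x + ξ, y - η) := by
    simp [Prod.ext_iff, sub_eq_add_neg]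
  rw [e1, e2] at h1; rw [e3, e4] at h2
  have hn1 : ‖((ξ, η) : ℝ × ℝ)‖ ^ 2 ≤ ξ ^ 2 + η ^ 2 := by
    have : ‖((ξ, η) : ℝ × ℝ)‖ = max |ξ| |η| := by
      simp [Prod.norm_def, Real.norm_eq_abs]
    rw [this]
    rcases max_cases |ξ| |η| with ⟨h, _⟩ | ⟨h, _⟩ <;> rw [h] <;>
      nlinarith [sq_abs ξ, sq_abs η, sq_nonneg ξ, sq_nonneg η]
  have hn2 : ‖((-ξ, η) : ℝ × ℝ)‖ ^ 2 ≤ ξ ^ 2 + η ^ 2 := by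
    have : ‖((-ξ, η) : ℝ × ℝ)‖ = max |ξ| |η| := by
      simp [Prod.norm_def, Real.norm_eq_abs]
    rw [this]
    rcases max_cases |ξ| |η| with ⟨h, _⟩ | ⟨h, _⟩ <;> rw [h] <;>
      nlinarith [sq_abs ξ, sq_abs η, sq_nonneg ξ, sq_nonneg η]
  have hg : gfun u x y ξ η =
      (u (x + ξ, y + η) + u (x - ξ, y - η) - 2 * u (x, y)) +
      (u (x - ξ, y + η) + u (x + ξ, y - η) - 2 * u (x, y)) := by
    unfold gfun; ring
  rw [hg]
  calc |(u (x + ξ, y + η) + u (x - ξ, y - η) - 2 * u (x, y)) +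
      (u (x - ξ, y + η) + u (x + ξ, y - η) - 2 * u (x, y))|
      ≤ |u (x + ξ, y + η) + u (x - ξ, y - η) - 2 * u (x, y)| +
        |u (x - ξ, y + η) + u (x + ξ, y - η) - 2 * u (x, y)| := abs_add_le _ _
    _ ≤ 2 * M * ‖((ξ, η) : ℝ × ℝ)‖ ^ 2 + 2 * M * ‖((-ξ, η) : ℝ × ℝ)‖ ^ 2 := add_le_add h1 h2
    _ ≤ 4 * M * (ξ ^ 2 + η ^ 2) := by nlinarith [hn1, hn2, hM0]

lemma phi_bound (u : ℝ × ℝ → ℝ) (hu : ContDiff ℝ 2 u) (M lam γ : ℝ)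
    (hM : ∀ p : ℝ × ℝ, ‖iteratedFDeriv ℝ 2 u p‖ ≤ M) (hlam : 0 ≤ lam) (hγ0 : 0 < γ)
    (x y ξ η : ℝ) :
    |phi u lam γ x y ξ η| ≤ 4 * M * (ξ ^ 2 + η ^ 2) ^ (1 - γ / 2) := by
  have hM0 : 0 ≤ M := le_trans (norm_nonneg _) (hM 0)
  have hs0 : 0 ≤ ξ ^ 2 + η ^ 2 := by positivity
  rcases eq_or_lt_of_le hs0 with hs | hs
  · rw [phi, ← hs, Real.zero_rpow (by intro h; rw [neg_eq_zero] at h; linarith), mul_zero,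
      abs_zero]
    positivity
  · have hexp : Real.exp (-(lam * Real.sqrt (ξ ^ 2 + η ^ 2))) ≤ 1 := by
      rw [Real.exp_le_one_iff]
      have := Real.sqrt_nonneg (ξ ^ 2 + η ^ 2)
      nlinarith [mul_nonneg hlam this]
    have hrp : (0:ℝ) ≤ (ξ ^ 2 + η ^ 2) ^ (-(γ / 2)) := Real.rpow_nonneg hs0 _
    have habs : |phi u lam γ x y ξ η| =
        |gfun u x y ξ η| * Real.exp (-(lam * Real.sqrt (ξ ^ 2 + η ^ 2))) *
        (ξ ^ 2 + η ^ 2) ^ (-(γ / 2)) := by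
      rw [phi, abs_mul, abs_mul, abs_of_nonneg (Real.exp_nonneg _), abs_of_nonneg hrp]
    rw [habs]
    have hgb := gfun_bound u hu M hM x y ξ η
    have step1 : |gfun u x y ξ η| * Real.exp (-(lam * Real.sqrt (ξ ^ 2 + η ^ 2))) *
        (ξ ^ 2 + η ^ 2) ^ (-(γ / 2))
        ≤ (4 * M * (ξ ^ 2 + η ^ 2)) * (ξ ^ 2 + η ^ 2) ^ (-(γ / 2)) := by
      have h1 : |gfun u x y ξ η| * Real.exp (-(lam * Real.sqrt (ξ ^ 2 + η ^ 2)))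
          ≤ 4 * M * (ξ ^ 2 + η ^ 2) := by
        nlinarith [abs_nonneg (gfun u x y ξ η), Real.exp_pos (-(lam * Real.sqrt (ξ ^ 2 + η ^ 2)))]
      exact mul_le_mul_of_nonneg_right h1 hrp
    refine step1.trans (le_of_eq ?_)
    rw [show (1 - γ / 2) = 1 + (-(γ / 2)) by ring, Real.rpow_add hs, Real.rpow_one]
    ring

lemma iter_bound (h e K : ℝ) (hh : 0 < h) (he : -1 < e) (hK : 0 ≤ K)
    (f : ℝ → ℝ → ℝ)
    (hf : ∀ ξ ∈ Set.Ioc (0:ℝ) h, ∀ η ∈ Set.Ioc (0:ℝ) h, |f ξ η| ≤ K * (ξ ^ e * η ^ e)) :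
    |∫ ξ in (0:ℝ)..h, ∫ η in (0:ℝ)..h, f ξ η| ≤ K * (h ^ (e + 1) / (e + 1)) ^ 2 := by
  have he1 : 0 < e + 1 := by linarith
  have hint : IntegrableOn (fun t : ℝ => t ^ e) (Ioc 0 h) := by
    have := intervalIntegral.intervalIntegrable_rpow' (a := (0:ℝ)) (b := h) he
    rwa [intervalIntegrable_iff_integrableOn_Ioc_of_le hh.le] at this
  have hval : ∫ t in Ioc (0:ℝ) h, t ^ e = h ^ (e + 1) / (e + 1) := by
    rw [← intervalIntegral.integral_of_le hh.le,
      integral_rpow (Or.inl he), Real.zero_rpow (ne_of_gt he1)]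
    ring
  set c := h ^ (e + 1) / (e + 1) with hc
  have hcpos : 0 ≤ c := div_nonneg (Real.rpow_nonneg hh.le _) he1.le
  have inner : ∀ ξ ∈ Ioc (0:ℝ) h,
      |∫ η in (0:ℝ)..h, f ξ η| ≤ K * ξ ^ e * c := by
    intro ξ hξ
    rw [intervalIntegral.integral_of_le hh.le]
    have := MeasureTheory.norm_integral_le_of_norm_le
      (f := fun η => f ξ η) (g := fun η => K * ξ ^ e * η ^ e)
      (μ := volume.restrict (Ioc (0:ℝ) h))
      (hint.const_mul (K * ξ ^ e))
      (by filter_upwards [ae_restrict_mem measurableSet_Ioc] with η hη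
          rw [Real.norm_eq_abs]
          calc |f ξ η| ≤ K * (ξ ^ e * η ^ e) := hf ξ hξ η hη
            _ = K * ξ ^ e * η ^ e := by ring)
    rw [Real.norm_eq_abs] at this
    refine this.trans (le_of_eq ?_)
    rw [integral_const_mul, hval]
  rw [intervalIntegral.integral_of_le hh.le]
  have := MeasureTheory.norm_integral_le_of_norm_le
    (f := fun ξ => ∫ η in (0:ℝ)..h, f ξ η) (g := fun ξ => K * c * ξ ^ e)
    (μ := volume.restrict (Ioc (0:ℝ) h))
    (hint.const_mul (K * c))
    (by filter_upwards [ae_restrict_mem measurableSet_Ioc] with ξ hξ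
        rw [Real.norm_eq_abs]
        calc |∫ η in (0:ℝ)..h, f ξ η| ≤ K * ξ ^ e * c := inner ξ hξ
          _ = K * c * ξ ^ e := by ring)
  rw [Real.norm_eq_abs] at this
  refine this.trans (le_of_eq ?_)
  rw [integral_const_mul, hval]
  ring

set_option maxHeartbeats 1000000 in
/-- The four-point weighted trapezoidal rule on the singular cell [0,h]²: for
γ ∈ (β,2) the value of φ_γ at the origin corner vanishes in the limit, and the
resulting three-point weighted trapezoidal rule has error at most C·h^{2-β},
with C independent of h and of (x,y). -/
theorem singular_cell_trapezoidal_rule (β lam γ : ℝ)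
    (hβ : β ∈ Set.Ioo (0 : ℝ) 2) (hlam : 0 ≤ lam) (hγ : γ ∈ Set.Ioc β 2)
    (u : ℝ × ℝ → ℝ) (hu : ContDiff ℝ 2 u)
    (hbdd : ∃ M : ℝ, ∀ p : ℝ × ℝ, ‖iteratedFDeriv ℝ 2 u p‖ ≤ M) :
    γ < 2 →
      (∀ x y : ℝ,
        Filter.Tendsto (fun p : ℝ × ℝ => phi u lam γ x y p.1 p.2)
          (nhdsWithin ((0, 0) : ℝ × ℝ) {p : ℝ × ℝ | 0 < p.1 ∧ 0 < p.2}) (nhds 0)) ∧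
      ∃ C > 0, ∀ x y h : ℝ, 0 < h →
        |(∫ ξ in (0:ℝ)..h, ∫ η in (0:ℝ)..h,
            phi u lam γ x y ξ η * (ξ ^ 2 + η ^ 2) ^ ((γ - 2 - β) / 2)) -
          (1 / 4) * (phi u lam γ x y 0 h + phi u lam γ x y h h + phi u lam γ x y h 0) *
            (∫ ξ in (0:ℝ)..h, ∫ η in (0:ℝ)..h, (ξ ^ 2 + η ^ 2) ^ ((γ - 2 - β) / 2))|
          ≤ C * h ^ (2 - β) := by
  intro hγ2
  obtain ⟨M, hM⟩ := hbdd
  have hM0 : 0 ≤ M := le_trans (norm_nonneg _) (hM 0)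
  have hβ0 : 0 < β := hβ.1
  have hβ2 : β < 2 := hβ.2
  have hγ0 : 0 < γ := lt_trans hβ0 hγ.1
  have hβγ : β < γ := hγ.1
  have hexp : 0 < 1 - γ / 2 := by linarith
  constructor
  · -- the limit
    intro x y
    have hb : Tendsto (fun p : ℝ × ℝ => 4 * M * (p.1 ^ 2 + p.2 ^ 2) ^ (1 - γ / 2))
        (𝓝 ((0, 0) : ℝ × ℝ)) (𝓝 0) := by
      have hcont : ContinuousAt (fun s : ℝ => s ^ (1 - γ / 2)) 0 :=
        Real.continuousAt_rpow_const 0 _ (Or.inr hexp.le)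
      have hbase : Tendsto (fun p : ℝ × ℝ => p.1 ^ 2 + p.2 ^ 2)
          (𝓝 ((0, 0) : ℝ × ℝ)) (𝓝 0) := by
        have hc : Continuous (fun p : ℝ × ℝ => p.1 ^ 2 + p.2 ^ 2) := by continuity
        have := hc.tendsto ((0, 0) : ℝ × ℝ)
        simpa using this
      have := hcont.tendsto.comp hbase
      rw [Real.zero_rpow (ne_of_gt hexp)] at this
      have := this.const_mul (4 * M)
      simpa using this
    have hb' := hb.mono_left (nhdsWithin_le_nhds
      (s := {p : ℝ × ℝ | 0 < p.1 ∧ 0 < p.2}))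
    apply squeeze_zero_norm _ hb'
    intro p
    simpa [Real.norm_eq_abs] using phi_bound u hu M lam γ hM hlam hγ0 x y p.1 p.2
  · -- the error bound
    have hd : 0 < (γ - β) / 2 := by linarith
    have hb2 : 0 < 1 - β / 2 := by linarith
    refine ⟨4 * M / (1 - β / 2) ^ 2 + 4 * M / ((γ - β) / 2) ^ 2 + 1, ?_, ?_⟩
    · have h1 : 0 ≤ 4 * M / (1 - β / 2) ^ 2 := by positivity
      have h2 : 0 ≤ 4 * M / ((γ - β) / 2) ^ 2 := by positivity
      linarith
    intro x y h hh
    have hP : 0 < h ^ (2 - β) := Real.rpow_pos_of_pos hh _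
    -- pointwise bounds on the open cell
    have hptI : ∀ ξ ∈ Set.Ioc (0:ℝ) h, ∀ η ∈ Set.Ioc (0:ℝ) h,
        |phi u lam γ x y ξ η * (ξ ^ 2 + η ^ 2) ^ ((γ - 2 - β) / 2)|
          ≤ (4 * M) * (ξ ^ (-(β / 2)) * η ^ (-(β / 2))) := by
      intro ξ hξ η hη
      have hξ0 : 0 < ξ := hξ.1
      have hη0 : 0 < η := hη.1
      have hs : 0 < ξ ^ 2 + η ^ 2 := by positivity
      have hw : (0:ℝ) ≤ (ξ ^ 2 + η ^ 2) ^ ((γ - 2 - β) / 2) := Real.rpow_nonneg hs.le _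
      rw [abs_mul, abs_of_nonneg hw]
      have h1 : |phi u lam γ x y ξ η| * (ξ ^ 2 + η ^ 2) ^ ((γ - 2 - β) / 2)
          ≤ (4 * M * (ξ ^ 2 + η ^ 2) ^ (1 - γ / 2)) * (ξ ^ 2 + η ^ 2) ^ ((γ - 2 - β) / 2) :=
        mul_le_mul_of_nonneg_right (phi_bound u hu M lam γ hM hlam hγ0 x y ξ η) hw
      refine h1.trans ?_
      have h2 : (ξ ^ 2 + η ^ 2) ^ (1 - γ / 2) * (ξ ^ 2 + η ^ 2) ^ ((γ - 2 - β) / 2)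
          = (ξ ^ 2 + η ^ 2) ^ (-(β / 2)) := by
        rw [← Real.rpow_add hs]
        congr 1; ring
      have h3 : (ξ ^ 2 + η ^ 2) ^ (-(β / 2)) ≤ (ξ * η) ^ (-(β / 2)) := by
        apply Real.rpow_le_rpow_of_nonpos (by positivity) (by nlinarith [sq_nonneg (ξ - η)])
        linarith
      have h4 : (ξ * η) ^ (-(β / 2)) = ξ ^ (-(β / 2)) * η ^ (-(β / 2)) :=
        Real.mul_rpow hξ0.le hη0.le
      calc 4 * M * (ξ ^ 2 + η ^ 2) ^ (1 - γ / 2) * (ξ ^ 2 + η ^ 2) ^ ((γ - 2 - β) / 2)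
          = 4 * M * ((ξ ^ 2 + η ^ 2) ^ (1 - γ / 2) * (ξ ^ 2 + η ^ 2) ^ ((γ - 2 - β) / 2)) := by
            ring
        _ = 4 * M * (ξ ^ 2 + η ^ 2) ^ (-(β / 2)) := by rw [h2]
        _ ≤ 4 * M * ((ξ * η) ^ (-(β / 2))) := by
            apply mul_le_mul_of_nonneg_left h3 (by linarith)
        _ = 4 * M * (ξ ^ (-(β / 2)) * η ^ (-(β / 2))) := by rw [h4]
    have hI := iter_bound h (-(β / 2)) (4 * M) hh (by linarith) (by linarith) _ hptI
    have hptG : ∀ ξ ∈ Set.Ioc (0:ℝ) h, ∀ η ∈ Set.Ioc (0:ℝ) h,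
        |(ξ ^ 2 + η ^ 2) ^ ((γ - 2 - β) / 2)|
          ≤ 1 * (ξ ^ ((γ - 2 - β) / 2) * η ^ ((γ - 2 - β) / 2)) := by
      intro ξ hξ η hη
      have hξ0 : 0 < ξ := hξ.1
      have hη0 : 0 < η := hη.1
      have hs : 0 < ξ ^ 2 + η ^ 2 := by positivity
      rw [abs_of_nonneg (Real.rpow_nonneg hs.le _), one_mul,
        ← Real.mul_rpow hξ0.le hη0.le]
      apply Real.rpow_le_rpow_of_nonpos (by positivity) (by nlinarith [sq_nonneg (ξ - η)])
      linarith
    have hG := iter_bound h ((γ - 2 - β) / 2) 1 hh (by linarith) (by norm_num) _ hptG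
    rw [one_mul] at hG
    -- simplify the exponents
    have pow2 : ∀ a : ℝ, (h ^ a) ^ (2:ℕ) = h ^ (a * 2) := by
      intro a
      rw [← Real.rpow_natCast (h ^ a) 2, ← Real.rpow_mul hh.le]
      norm_num
    have hIexp : (h ^ (-(β / 2) + 1) / (-(β / 2) + 1)) ^ 2
        = h ^ (2 - β) / (1 - β / 2) ^ 2 := by
      rw [div_pow, pow2]
      congr 2
      · congr 1; ring
      · ring
    have hGexp : (h ^ ((γ - 2 - β) / 2 + 1) / ((γ - 2 - β) / 2 + 1)) ^ 2
        = h ^ (γ - β) / ((γ - β) / 2) ^ 2 := by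
      rw [div_pow, pow2]
      congr 2
      · congr 1; ring
      · ring
    rw [hIexp] at hI
    rw [hGexp] at hG
    -- corner bounds
    have hsq : (h:ℝ) ^ (2:ℕ) = h ^ ((2:ℕ) : ℝ) := (Real.rpow_natCast h 2).symm
    have hcorn : ∀ a b : ℝ, a ^ 2 + b ^ 2 = h ^ 2 →
        |phi u lam γ x y a b| ≤ 4 * M * h ^ (2 - γ) := by
      intro a b hab
      have := phi_bound u hu M lam γ hM hlam hγ0 x y a b
      rw [hab] at this
      refine this.trans (le_of_eq ?_)
      congr 1
      rw [hsq, ← Real.rpow_mul hh.le]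
      congr 1; push_cast; ring
    have hc1 : |phi u lam γ x y 0 h| ≤ 4 * M * h ^ (2 - γ) := hcorn 0 h (by ring)
    have hc3 : |phi u lam γ x y h 0| ≤ 4 * M * h ^ (2 - γ) := hcorn h 0 (by ring)
    have hc2 : |phi u lam γ x y h h| ≤ 8 * M * h ^ (2 - γ) := by
      have := phi_bound u hu M lam γ hM hlam hγ0 x y h h
      refine this.trans ?_
      have e1 : (h ^ 2 + h ^ 2 : ℝ) = 2 * h ^ 2 := by ring
      rw [e1, Real.mul_rpow (by norm_num) (by positivity)]
      have e2 : ((h:ℝ) ^ 2) ^ (1 - γ / 2) = h ^ (2 - γ) := by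
        rw [hsq, ← Real.rpow_mul hh.le]; congr 1; push_cast; ring
      rw [e2]
      have e3 : (2:ℝ) ^ (1 - γ / 2) ≤ 2 := by
        calc (2:ℝ) ^ (1 - γ / 2) ≤ (2:ℝ) ^ (1:ℝ) :=
          Real.rpow_le_rpow_of_exponent_le (by norm_num) (by linarith)
        _ = 2 := Real.rpow_one 2
      have hrp : 0 ≤ h ^ (2 - γ) := Real.rpow_nonneg hh.le _
      nlinarith [mul_nonneg (mul_nonneg hM0 hrp) (sub_nonneg.mpr e3),
        Real.rpow_nonneg (show (0:ℝ) ≤ 2 by norm_num) (1 - γ / 2)]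
    -- sum of corners
    set S := phi u lam γ x y 0 h + phi u lam γ x y h h + phi u lam γ x y h 0 with hS
    have hSb : |S| ≤ 16 * M * h ^ (2 - γ) := by
      calc |S| ≤ |phi u lam γ x y 0 h| + |phi u lam γ x y h h| + |phi u lam γ x y h 0| := by
            rw [hS]; exact (abs_add_le _ _).trans (add_le_add_left (abs_add_le _ _) _)
        _ ≤ 16 * M * h ^ (2 - γ) := by linarith
    set G := ∫ ξ in (0:ℝ)..h, ∫ η in (0:ℝ)..h, (ξ ^ 2 + η ^ 2) ^ ((γ - 2 - β) / 2) with hGdef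
    set I := ∫ ξ in (0:ℝ)..h, ∫ η in (0:ℝ)..h,
        phi u lam γ x y ξ η * (ξ ^ 2 + η ^ 2) ^ ((γ - 2 - β) / 2) with hIdef
    have hTG : |(1 / 4) * S * G| ≤ 4 * M * h ^ (2 - β) / ((γ - β) / 2) ^ 2 := by
      rw [abs_mul, abs_mul]
      have h14 : |(1:ℝ) / 4| = 1 / 4 := by norm_num
      rw [h14]
      have hGnn : (0:ℝ) ≤ |G| := abs_nonneg _
      have hSnn : (0:ℝ) ≤ |S| := abs_nonneg _
      have hstep : |S| * |G| ≤ (16 * M * h ^ (2 - γ)) * (h ^ (γ - β) / ((γ - β) / 2) ^ 2) := by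
        apply mul_le_mul hSb hG hGnn
        exact mul_nonneg (by linarith) (Real.rpow_nonneg hh.le _)
      have hmulexp : h ^ (2 - γ) * h ^ (γ - β) = h ^ (2 - β) := by
        rw [← Real.rpow_add hh]; congr 1; ring
      calc (1 / 4) * |S| * |G| ≤ (1 / 4) * ((16 * M * h ^ (2 - γ)) * (h ^ (γ - β) / ((γ - β) / 2) ^ 2)) := by
            rw [mul_assoc]
            apply mul_le_mul_of_nonneg_left hstep (by norm_num)
        _ = 4 * M * (h ^ (2 - γ) * h ^ (γ - β)) / ((γ - β) / 2) ^ 2 := by ring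
        _ = 4 * M * h ^ (2 - β) / ((γ - β) / 2) ^ 2 := by rw [hmulexp]
    have final : |I - (1 / 4) * S * G| ≤ |I| + |(1 / 4) * S * G| := abs_sub _ _
    have hIb : |I| ≤ 4 * M * (h ^ (2 - β) / (1 - β / 2) ^ 2) := hI
    calc |I - (1 / 4) * S * G| ≤ |I| + |(1 / 4) * S * G| := final
      _ ≤ 4 * M * (h ^ (2 - β) / (1 - β / 2) ^ 2) + 4 * M * h ^ (2 - β) / ((γ - β) / 2) ^ 2 := by
          linarith
      _ = (4 * M / (1 - β / 2) ^ 2 + 4 * M / ((γ - β) / 2) ^ 2) * h ^ (2 - β) := by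
          field_simp
      _ ≤ (4 * M / (1 - β / 2) ^ 2 + 4 * M / ((γ - β) / 2) ^ 2 + 1) * h ^ (2 - β) := by
          nlinarith [hP]
end
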